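/- arXiv:1504.01712 — 10 statements merged into one kernel-verified Lean document; each statement's English description precedes it below -/
import Mathlib

section
/- The rank-one free left module OPol_n(α) with cyclic vector 1_α and differential d(1_α) = Σ_i α_i x_i 1_α satisfies d² = 0 if and only if every component α_i lies in {0,1}. -/
/-!
Writing `s = ∑ i, α i • x i`, the twisted differential is `d_s f = d f + ι f * s`. Since `s` is odd,
`d_s ∘ d_s` is right multiplication by the curvature `d s - s ^ 2`. The generators anticommute,
so `s ^ 2 = ∑ i, α i ^ 2 • x i ^ 2`, while `d s = ∑ i, α i • x i ^ 2`; by linear independence of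
the squares `x i ^ 2`, the curvature vanishes exactly when every `α i` is idempotent.
-/

open Finset

theorem sq_sum_eq_sum_sq_of_anticomm {ι A : Type*} [Ring A] (s : Finset ι) (y : ι → A)
    (hy : ∀ i ∈ s, ∀ j ∈ s, i ≠ j → y i * y j = -(y j * y i)) :
    (∑ i ∈ s, y i) ^ 2 = ∑ i ∈ s, y i ^ 2 := by
  classical
  induction s using Finset.induction_on with
  | empty => simp
  | insert a s ha ih =>
    have hcross : y a * ∑ j ∈ s, y j + (∑ j ∈ s, y j) * y a = 0 := by
      rw [mul_sum, sum_mul, ← sum_add_distrib]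
      refine sum_eq_zero fun j hj => ?_
      rw [hy a (mem_insert_self a s) j (mem_insert_of_mem hj) (ne_of_mem_of_not_mem hj ha).symm,
        neg_add_cancel]
    have ih' := ih fun i hi j hj => hy i (mem_insert_of_mem hi) j (mem_insert_of_mem hj)
    rw [sum_insert ha, sum_insert ha, ← ih', sq, sq, sq, add_mul, mul_add, mul_add]
    linear_combination (norm := skip) hcross
    noncomm_ring

section TwistedDifferential

variable {A F : Type*} [Ring A] [FunLike F A A] [RingHomClass F A A]

/-- The differential `d(f·1_α) = (d f + ι f · s)·1_α` of the rank-one module with twist `s`. -/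
def twistedDifferential (d : A → A) (ι : F) (s : A) (f : A) : A :=
  d f + ι f * s

theorem twistedDifferential_twistedDifferential (d : A → A) (ι : F)
    (hιι : ∀ a, ι (ι a) = a) (hd_add : ∀ a b, d (a + b) = d a + d b)
    (hd_leib : ∀ a b, d (a * b) = d a * b + ι a * d b) (hdd : ∀ a, d (d a) = 0)
    (hdι : ∀ a, d (ι a) = -ι (d a)) {s : A} (hιs : ι s = -s) (f : A) :
    twistedDifferential d ι s (twistedDifferential d ι s f) = f * (d s - s ^ 2) := by
  simp only [twistedDifferential]
  rw [hd_add, hd_leib, hdd, hdι, hιι, map_add, map_mul, hιι, hιs]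
  noncomm_ring

end TwistedDifferential

/-- Let `A` be the skew polynomial superalgebra
`OPol_n = k⟨x_1,…,x_n⟩/(x_i x_j + x_j x_i, i ≠ j)` over a commutative domain `R`,
presented abstractly: `x i` are odd anticommuting generators (with the squares
`x i ^ 2` linearly independent, as holds in `OPol_n`), `ι` is the parity
involution and `d` the odd derivation with `d (x i) = x i ^ 2`.  For `α ∈ Rⁿ`
the rank-one free left module `OPol_n(α)` with cyclic vector `1_α` and
`d(f·1_α) = (d f + ι f · Σ α_i x_i)·1_α` satisfies `d² = 0` if and only if
every `α i` lies in `{0,1}`. -/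
theorem stmt0 {R A : Type*} [CommRing R] [IsDomain R] [Ring A] [Algebra R A]
    {n : ℕ} (x : Fin n → A)
    (hxx : ∀ i j, i ≠ j → x i * x j = -(x j * x i))
    (hli : LinearIndependent R fun i => x i ^ 2)
    (ι : A →ₐ[R] A) (hιx : ∀ i, ι (x i) = -x i) (hιι : ∀ a, ι (ι a) = a)
    (d : A → A)
    (hd_add : ∀ a b, d (a + b) = d a + d b)
    (hd_smul : ∀ (c : R) (a : A), d (c • a) = c • d a)
    (hd_leib : ∀ a b, d (a * b) = d a * b + ι a * d b)
    (hdx : ∀ i, d (x i) = x i ^ 2)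
    (hdd : ∀ a, d (d a) = 0)
    (hdι : ∀ a, d (ι a) = -ι (d a))
    (α : Fin n → R) :
    (∀ f : A,
        d (d f + ι f * ∑ i, α i • x i) +
          ι (d f + ι f * ∑ i, α i • x i) * ∑ i, α i • x i = 0)
      ↔ ∀ i, α i = 0 ∨ α i = 1 := by
  set s := ∑ i, α i • x i
  let dR : A →ₗ[R] A := ⟨⟨d, hd_add⟩, hd_smul⟩
  have hds : d s = ∑ i, α i • x i ^ 2 := by
    change dR (∑ i, α i • x i) = _
    simp only [map_sum, map_smul]
    exact sum_congr rfl fun i _ => congrArg (α i • ·) (hdx i)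
  have hss : s ^ 2 = ∑ i, (α i * α i) • x i ^ 2 := by
    refine (sq_sum_eq_sum_sq_of_anticomm _ _ fun i _ j _ hij => ?_).trans
      (sum_congr rfl fun i _ => by rw [smul_pow, sq])
    rw [smul_mul_smul_comm, smul_mul_smul_comm, hxx i j hij, mul_comm, smul_neg]
  have hιs : ι s = -s := by simp [s, map_sum, hιx]
  have hcurv : d s - s ^ 2 = ∑ i, (α i - α i * α i) • x i ^ 2 := by
    simp only [hds, hss, sub_smul, sum_sub_distrib]
  have hsq := twistedDifferential_twistedDifferential d ι hιι hd_add hd_leib hdd hdι hιs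
  simp only [twistedDifferential] at hsq
  simp only [hsq]
  calc (∀ f : A, f * (d s - s ^ 2) = 0)
      ↔ ∀ i, α i - α i * α i = 0 := by
        rw [hcurv]
        refine ⟨fun h => Fintype.linearIndependent_iff.mp hli _ (by simpa using h 1),
          fun h f => by simp [h]⟩
    _ ↔ ∀ i, α i = 0 ∨ α i = 1 := by
        refine forall_congr' fun i => ?_
        rw [sub_eq_zero, eq_comm, ← IsIdempotentElem.iff_eq_zero_or_one, IsIdempotentElem]
end

section
/- In OPol_n with differential d(x_i) = x_i² extended as an odd derivation, the subalgebra OΛ_n of odd symmetric polynomials (generated by the untwisted odd elementary symmetric polynomials e_k) is closed under d; precisely, d(e_k) = e_1 e_k − {k+1} e_{k+1}, where {m} = 0 if m is even and 1 if m is odd, and e_{n+1} = 0. -/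
/-!
Splitting off the first generator, `e_{k+1} = x₀ e'_k + e'_{k+1}` where `e'` are the elementary
polynomials in the remaining generators, and induct on the number of generators. Since `x₀`
anticommutes with `e'_1`, the cross terms `e'_1 x₀ e'_k` of `e_1 e_{k+1}` cancel against those
coming from `ι(x₀) d(e'_k) = -x₀ d(e'_k)`, and what is left is `{k+1} + {k+2} = 1`.
Closure of `OΛ_n` under `d` then follows from the Leibniz rule, because `ι(e_k) = ±e_k`.
-/

/-- The `k`-th untwisted odd elementary symmetric polynomial
`e_k = Σ_{i_1<…<i_k} x_{i_1}⋯x_{i_k}` (so `e_0 = 1` and `e_k = 0` for `k > n`). -/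
noncomputable def oddE {A : Type*} [Ring A] {n : ℕ} (x : Fin n → A) (k : ℕ) : A :=
  ∑ s ∈ Finset.powersetCard k (Finset.univ : Finset (Fin n)),
    ((Finset.sort s (· ≤ ·)).map x).prod

open Finset

section OddElementary

variable {A : Type*} [Ring A]

theorem oddE_zero {n : ℕ} (x : Fin n → A) : oddE x 0 = 1 := by
  simp [oddE]

theorem oddE_one {n : ℕ} (x : Fin n → A) : oddE x 1 = ∑ i, x i := by
  simp [oddE, powersetCard_one]

theorem oddE_eq_zero_of_lt {n k : ℕ} (x : Fin n → A) (h : n < k) : oddE x k = 0 := by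
  rw [oddE, powersetCard_eq_empty.mpr (by simpa using h), sum_empty]

theorem oddE_succ_tail {n : ℕ} (x : Fin (n + 1) → A) (k : ℕ) :
    oddE x (k + 1) = x 0 * oddE (Fin.tail x) k + oddE (Fin.tail x) (k + 1) := by
  classical
  let s : Finset (Fin (n + 1)) := univ.map (Fin.succEmb n)
  have h0 : (0 : Fin (n + 1)) ∉ s := by simp [s, Fin.succ_ne_zero]
  have h0_notMem {j : ℕ} {t : Finset (Fin (n + 1))} (ht : t ∈ powersetCard j s) : 0 ∉ t :=
    fun h => h0 ((mem_powersetCard.mp ht).1 h)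
  have sum_tail (j : ℕ) :
      ∑ t ∈ powersetCard j s, ((t.sort (· ≤ ·)).map x).prod = oddE (Fin.tail x) j := by
    rw [powersetCard_map, sum_map, oddE]
    refine sum_congr rfl fun t _ => ?_
    change ((t.map (Fin.succEmb n)).sort.map x).prod = _
    rw [← (Fin.strictMono_succ.strictMonoOn _).map_finsetSort, List.map_map]
    rfl
  rw [oddE, Fin.univ_succ, cons_eq_insert]
  change ∑ t ∈ powersetCard (k + 1) (insert 0 s), _ = _
  rw [powersetCard_succ_insert h0, sum_union, sum_image, sum_tail, add_comm, ← sum_tail k,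
    mul_sum]
  · congr 1
    refine sum_congr rfl fun t ht => ?_
    rw [sort_insert _ (fun b _ => Fin.zero_le b) (h0_notMem ht), List.map_cons, List.prod_cons]
  · intro t ht u hu htu
    rw [← erase_insert (h0_notMem ht), htu, erase_insert (h0_notMem hu)]
  · refine disjoint_left.mpr fun t ht ht' => h0_notMem ht ?_
    obtain ⟨u, -, rfl⟩ := mem_image.mp ht'
    exact mem_insert_self 0 u

theorem map_list_prod_of_forall_eq_neg (ι : A →+* A) {l : List A} (h : ∀ a ∈ l, ι a = -a) :
    ι l.prod = (-1) ^ l.length * l.prod := by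
  rw [map_list_prod, List.map_congr_left h, List.prod_map_neg]

theorem map_oddE_of_forall_eq_neg (ι : A →+* A) {n : ℕ} {x : Fin n → A}
    (hιx : ∀ i, ι (x i) = -x i) (k : ℕ) :
    ι (oddE x k) = (-1) ^ k * oddE x k := by
  rw [oddE, map_sum, mul_sum]
  refine sum_congr rfl fun s hs => ?_
  rw [map_list_prod_of_forall_eq_neg ι (by simpa using fun i _ => hιx i), List.length_map,
    length_sort, (mem_powersetCard.mp hs).2]

section Leibniz

variable (ι : A →+* A) (d : A →+ A)

theorem map_one_of_leibniz (hd : ∀ a b, d (a * b) = d a * b + ι a * d b) : d 1 = 0 := by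
  simpa using hd 1 1

theorem map_mem_closure_of_leibniz (hd : ∀ a b, d (a * b) = d a * b + ι a * d b) {s : Set A}
    (hιs : ∀ a ∈ s, ι a ∈ Subring.closure s) (hds : ∀ a ∈ s, d a ∈ Subring.closure s)
    {a : A} (ha : a ∈ Subring.closure s) : d a ∈ Subring.closure s := by
  have hι : (Subring.closure s).map ι ≤ Subring.closure s := by
    rw [RingHom.map_closure]
    exact Subring.closure_le.mpr (Set.image_subset_iff.mpr hιs)
  induction ha using Subring.closure_induction with
  | mem b hb => exact hds b hb
  | zero => simp
  | one => simp [map_one_of_leibniz ι d hd]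
  | add a b _ _ hA hB => rw [map_add]; exact add_mem hA hB
  | neg a _ hA => rw [map_neg]; exact neg_mem hA
  | mul a b ha hb hA hB =>
    rw [hd]
    exact add_mem (mul_mem hA hb) (mul_mem (hι ⟨a, ha, rfl⟩) hB)

theorem map_oddE_of_leibniz (hd : ∀ a b, d (a * b) = d a * b + ι a * d b) {n : ℕ}
    (x : Fin n → A) (hxx : ∀ i j, i ≠ j → x i * x j = -(x j * x i))
    (hιx : ∀ i, ι (x i) = -x i) (hdx : ∀ i, d (x i) = x i ^ 2) (k : ℕ) :
    d (oddE x k) =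
      oddE x 1 * oddE x k - (if Even (k + 1) then (0 : A) else 1) * oddE x (k + 1) := by
  induction n generalizing k with
  | zero =>
    rcases k with _ | k
    · simp [oddE_zero, map_one_of_leibniz ι d hd]
    · simp [oddE_eq_zero_of_lt]
  | succ n ih =>
    rcases k with _ | k
    · simp [oddE_zero, map_one_of_leibniz ι d hd]
    have anticomm : oddE (Fin.tail x) 1 * x 0 = -(x 0 * oddE (Fin.tail x) 1) := by
      rw [oddE_one, mul_sum, sum_mul, ← sum_neg_distrib]
      exact sum_congr rfl fun i _ => hxx i.succ 0 (Fin.succ_ne_zero i)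
    have ih_tail := ih (Fin.tail x) (fun i j hij => hxx _ _ (Fin.succ_injective _ |>.ne hij))
      (fun i => hιx _) (fun i => hdx _)
    rw [oddE_succ_tail x k, oddE_succ_tail x (k + 1), oddE_succ_tail x 0, oddE_zero, map_add, hd,
      hdx, hιx, ih_tail k, ih_tail (k + 1), add_mul, mul_add, mul_add,
      ← mul_assoc (oddE (Fin.tail x) 1), anticomm]
    by_cases he : Even (k + 1) <;>
      simp only [Nat.even_add_one (n := k + 1), he, ↓reduceIte, not_true_eq_false,
        not_false_eq_true] <;>
      noncomm_ring

end Leibniz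

end OddElementary

/-- In `OPol_n` (presented abstractly: `x i` odd anticommuting
generators, `ι` the parity involution, `d` the odd derivation with
`d (x i) = x i ^ 2`), the differential satisfies
`d(e_k) = e_1 e_k − {k+1} e_{k+1}` (with `{m} = 0` for `m` even, `1` for `m` odd
and `e_{n+1} = 0`); consequently the subalgebra `OΛ_n` generated by the `e_k`
is closed under `d`. -/
theorem stmt1 {A : Type*} [Ring A] {n : ℕ} (x : Fin n → A)
    (hxx : ∀ i j, i ≠ j → x i * x j = -(x j * x i))
    (ι : A →+* A) (hιx : ∀ i, ι (x i) = -x i)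
    (d : A → A)
    (hd_add : ∀ a b, d (a + b) = d a + d b)
    (hd_leib : ∀ a b, d (a * b) = d a * b + ι a * d b)
    (hdx : ∀ i, d (x i) = x i ^ 2) :
    (∀ k : ℕ, d (oddE x k) =
        oddE x 1 * oddE x k - (if Even (k + 1) then (0 : A) else 1) * oddE x (k + 1))
      ∧ ∀ a ∈ Subring.closure (Set.range (oddE x)),
          d a ∈ Subring.closure (Set.range (oddE x)) := by
  let D : A →+ A := AddMonoidHom.mk' d hd_add
  have formula := map_oddE_of_leibniz ι D hd_leib x hxx hιx hdx
  have mem (k : ℕ) : oddE x k ∈ Subring.closure (Set.range (oddE x)) :=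
    Subring.subset_closure ⟨k, rfl⟩
  refine ⟨formula, fun a ha => map_mem_closure_of_leibniz ι D hd_leib ?_ ?_ ha⟩
  · rintro _ ⟨k, rfl⟩
    rw [map_oddE_of_forall_eq_neg ι hιx]
    rcases neg_one_pow_eq_or A k with h | h <;> simp [h, mem k]
  · rintro _ ⟨k, rfl⟩
    rw [formula k]
    refine sub_mem (mul_mem (mem 1) (mem k)) (mul_mem ?_ (mem (k + 1)))
    split_ifs <;> simp
end

section
/- For any parity-homogeneous skew polynomial f ∈ OPol_n, f·x^δ = (−1)^{binom(n−1,2)·p(f)} x^δ·θ(f), where x^δ = x_1^{n−1} x_2^{n−2} ··· x_{n−1} and θ is the twisting involution x_i ↦ (−1)^{i−1} x_i. -/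
/-- The staircase monomial `x^δ = x_1^{n−1} x_2^{n−2} ⋯ x_{n−1}`
(0-indexed: `x i ^ (n − 1 − i)`). -/
noncomputable def xDelta {A : Type*} [Ring A] {n : ℕ} (x : Fin n → A) : A :=
  ((List.finRange n).map fun i => x i ^ (n - 1 - (i : ℕ))).prod

/-- In `OPol_n` (presented abstractly: `x i` odd anticommuting
generators, `ι` the parity involution, `θ` the twisting involution
`x_i ↦ (−1)^{i−1} x_i`), for any parity-homogeneous skew polynomial `f`
(i.e. `f` in the subring generated by the `x i` with `ι f = (−1)^m f`, `m` its
parity) one has `f · x^δ = (−1)^{C(n−1,2)·p(f)} x^δ · θ(f)`. -/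
theorem stmt3 {A : Type*} [Ring A] {n : ℕ} (x : Fin n → A)
    (hxx : ∀ i j, i ≠ j → x i * x j = -(x j * x i))
    (ι : A →+* A) (hιx : ∀ i, ι (x i) = -x i)
    (θ : A →+* A) (hθx : ∀ i, θ (x i) = (-1 : A) ^ (i : ℕ) * x i)
    (f : A) (hf : f ∈ Subring.closure (Set.range x))
    (m : ℕ) (hfm : ι f = (-1 : A) ^ m * f) :
    f * xDelta x = (-1 : A) ^ ((n - 1).choose 2 * m) * (xDelta x * θ f) := by
  set c := (n - 1).choose 2 with hc
  -- neg-one powers are central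
  have hcomm : ∀ (k : ℕ) (a : A), a * (-1 : A) ^ k = (-1 : A) ^ k * a := by
    intro k a
    exact ((Commute.neg_one_left a).pow_left k).symm.eq
  -- commuting a generator past a power of another generator
  have hxpow : ∀ (i j : Fin n) (e : ℕ), i ≠ j →
      x i * x j ^ e = (-1 : A) ^ e * (x j ^ e * x i) := by
    intro i j e hij
    induction e with
    | zero => simp
    | succ e ih =>
      rw [pow_succ, ← mul_assoc, ih, mul_assoc, mul_assoc, hxx i j hij]
      simp [pow_succ, mul_assoc, mul_neg]
  -- commuting a generator past a list of staircase factors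
  have hlist : ∀ (i : Fin n) (l : List (Fin n)),
      x i * ((l.map fun j => x j ^ (n - 1 - (j : ℕ))).prod)
        = (-1 : A) ^ ((l.map fun j => if j = i then 0 else n - 1 - (j : ℕ)).sum)
          * (((l.map fun j => x j ^ (n - 1 - (j : ℕ))).prod) * x i) := by
    intro i l
    induction l with
    | nil => simp
    | cons j t ih =>
      simp only [List.map_cons, List.prod_cons, List.sum_cons]
      by_cases hji : j = i
      · subst hji
        rw [← mul_assoc, (Commute.refl (x j)).pow_right _ |>.eq, mul_assoc, ih,
          if_pos rfl, Nat.zero_add, ← mul_assoc (x j ^ _), hcomm]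
        simp only [mul_assoc]
      · rw [← mul_assoc, hxpow i j _ (Ne.symm hji), mul_assoc, mul_assoc, ih,
          if_neg hji, ← mul_assoc (x j ^ _), hcomm]
        simp only [pow_add, mul_assoc]
  have hpull : ∀ (k : ℕ) (a b : A), a * ((-1 : A) ^ k * b) = (-1 : A) ^ k * (a * b) := by
    intro k a b
    rw [← mul_assoc, hcomm, mul_assoc]
  -- generator case
  have hgen : ∀ i : Fin n, x i * xDelta x = (-1 : A) ^ (c + (i : ℕ)) * (xDelta x * x i) := by
    intro i
    have hi : (i : ℕ) < n := i.isLt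
    have hsum : ((List.finRange n).map fun j => if j = i then 0 else n - 1 - (j : ℕ)).sum
        = c + (i : ℕ) := by
      have h1 : ((List.finRange n).map fun j => if j = i then 0 else n - 1 - (j : ℕ)).sum
          = ∑ j : Fin n, (if j = i then 0 else n - 1 - (j : ℕ)) := (Fin.sum_univ_def _).symm
      have h2 : (∑ j : Fin n, (n - 1 - (j : ℕ)))
          = (n - 1 - (i : ℕ)) + ∑ j : Fin n, (if j = i then 0 else n - 1 - (j : ℕ)) := by
        have : ∀ j : Fin n, (n - 1 - (j : ℕ))
            = (if j = i then n - 1 - (j : ℕ) else 0) + (if j = i then 0 else n - 1 - (j : ℕ)) := by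
          intro j; by_cases h : j = i <;> simp [h]
        rw [Finset.sum_congr rfl fun j _ => this j, Finset.sum_add_distrib,
          Finset.sum_ite_eq' Finset.univ i]
        simp
      have h3 : (∑ j : Fin n, (n - 1 - (j : ℕ))) = n.choose 2 := by
        rw [Fin.sum_univ_eq_sum_range, Finset.sum_range_reflect (fun j => j) n,
          Finset.sum_range_id, Nat.choose_two_right]
      have h4 : n.choose 2 = (n - 1).choose 2 + (n - 1) := by
        obtain ⟨k, rfl⟩ : ∃ k, n = k + 1 := ⟨n - 1, by omega⟩
        simp [Nat.choose_succ_succ, Nat.add_comm]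
      rw [h3, h4] at h2
      rw [h1, hc]
      omega
    have := hlist i (List.finRange n)
    rw [hsum] at this
    exact this
  -- iterates of ι on generators
  have L1 : ∀ (k : ℕ) (i : Fin n), (ι ^ k) (x i) = (-1 : A) ^ k * x i := by
    intro k i
    induction k with
    | zero => simp
    | succ k ih =>
      rw [pow_succ, RingHom.mul_def, RingHom.comp_apply, hιx, map_neg, ih, pow_succ]
      simp [mul_assoc, mul_neg, neg_mul]
  -- key commutation for all elements of the closure
  have key : ∀ g, g ∈ Subring.closure (Set.range x) →
      g * xDelta x = xDelta x * θ ((ι ^ c) g) := by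
    intro g hg
    induction hg using Subring.closure_induction with
    | mem a ha =>
      obtain ⟨i, rfl⟩ := ha
      rw [hgen i, L1, map_mul, map_pow, map_neg, map_one, hθx, hpull, hpull]
      simp only [pow_add, mul_assoc]
    | zero => simp
    | one => simp
    | add a b _ _ iha ihb => rw [add_mul, iha, ihb, map_add, map_add, mul_add]
    | neg a _ iha => rw [neg_mul, iha, map_neg, map_neg, mul_neg]
    | mul a b _ _ iha ihb =>
      rw [mul_assoc, ihb, ← mul_assoc, iha, mul_assoc, map_mul, map_mul]
  -- iterate ι on f
  have L2 : (ι ^ c) f = (-1 : A) ^ (c * m) * f := by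
    induction c with
    | zero => simp
    | succ k ih =>
      rw [pow_succ, RingHom.mul_def, RingHom.comp_apply, hfm, map_mul, map_pow, map_neg,
        map_one, ih, ← mul_assoc, ← pow_add, Nat.add_comm m (k * m), ← Nat.succ_mul]
  rw [key f hf, L2, map_mul, map_pow, map_neg, map_one, hpull]
end

section
/- The longest odd divided difference operator satisfies ∂_{w_0}(x^δ) = (−1)^{binom(n,3)}, where ∂_{w_0} = ∂_1(∂_2∂_1)···(∂_{n−1}···∂_1) and x^δ = x_1^{n−1}x_2^{n−2}···x_{n−1}. -/
/-- The (0-indexed) word `∂_1(∂_2∂_1)⋯(∂_{n−1}⋯∂_1)` of simple indices defining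
the longest odd divided difference operator `∂_{w_0}`. -/
def w0List : ℕ → List ℕ
  | 0 => []
  | n + 1 => w0List n ++ (List.range n).reverse

/-- The staircase monomial `x^δ = x_1^{n−1} x_2^{n−2} ⋯ x_{n−1}`. -/
noncomputable def xDeltaN {A : Type*} [Ring A] (n : ℕ) (x : ℕ → A) : A :=
  ((List.range n).map fun i => x i ^ (n - 1 - i)).prod

/-- Composite of a list of operators, leftmost applied last
(so `opProd [f₁,…,f_m] = f₁ ∘ ⋯ ∘ f_m`). -/
def opProd {A : Type*} (l : List (A → A)) : A → A := l.foldr (· ∘ ·) id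

/-!
Write `∂_{w_0}` for `n + 1` variables as `∂_{w_0}` for `n` variables after the block
`∂_{n-1} ⋯ ∂_0` (indices from 0). That block lowers the exponents of the staircase
`x_0^n ⋯ x_n^0` one at a time: before `∂_j` the monomial is `P · x_j^{e+1} x_{j+1}^e · T`, where
`∂_j` kills `P` and `T` (they avoid `x_j, x_{j+1}`), `σ_j P = (-1)^{deg P} P`, and
`∂_j (x_j^{e+1} x_{j+1}^e) = x_j^e x_{j+1}^e`. The block thus returns the staircase for `n`
variables with sign `(-1)^{Σ_j deg P_j}`, where `Σ_j deg P_j = C(n,2) + 2 C(n,3)`, and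
`C(n,2) + C(n,3) = C(n+1,3)` closes the induction.
-/
def IsTwistedDerivation {A : Type*} [Ring A] (σ : A →+* A) (δ : A → A) : Prop :=
  ∀ a b, δ (a * b) = δ a * b + σ a * δ b

theorem map_neg_one_pow_mul {A : Type*} [Ring A] (f : A →+ A) (k : ℕ) (a : A) :
    f ((-1) ^ k * a) = (-1) ^ k * f a := by
  rcases neg_one_pow_eq_or A k with h | h <;> simp [h]

theorem pow_mul_pow_of_mul_eq_neg {A : Type*} [Ring A] {a b : A} (h : b * a = -(a * b))
    (p q : ℕ) : b ^ q * a ^ p = (-1) ^ (p * q) * (a ^ p * b ^ q) := by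
  have hb : b * a ^ p = (-1) ^ p * (a ^ p * b) := by
    have hab : SemiconjBy b a (-a) := by rw [SemiconjBy, h, neg_mul]
    rw [(hab.pow_right p).eq, neg_pow, mul_assoc]
  induction q with
  | zero => simp
  | succ q ih =>
    calc b ^ (q + 1) * a ^ p = b ^ q * (b * a ^ p) := by rw [pow_succ, mul_assoc]
      _ = (-1) ^ p * ((b ^ q * a ^ p) * b) := by
        rw [hb, ← mul_assoc, ((Commute.neg_one_right _).pow_right _).eq, mul_assoc, mul_assoc]
      _ = (-1) ^ (p * (q + 1)) * (a ^ p * b ^ (q + 1)) := by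
        rw [ih, mul_assoc, ← mul_assoc, ← pow_add, pow_succ, mul_add_one, add_comm, mul_assoc]

namespace IsTwistedDerivation

variable {A : Type*} [Ring A] {σ : A →+* A} {δ : A → A}

theorem map_one (hδ : IsTwistedDerivation σ δ) : δ 1 = 0 := by
  simpa using hδ 1 1

theorem map_mul_of_left_eq_zero (hδ : IsTwistedDerivation σ δ) {a : A} (ha : δ a = 0) (b : A) :
    δ (a * b) = σ a * δ b := by
  rw [hδ, ha, zero_mul, zero_add]

theorem map_mul_of_right_eq_zero (hδ : IsTwistedDerivation σ δ) (a : A) {b : A} (hb : δ b = 0) :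
    δ (a * b) = δ a * b := by
  rw [hδ, hb, mul_zero, add_zero]

theorem map_pow_eq_zero (hδ : IsTwistedDerivation σ δ) {a : A} (ha : δ a = 0) (k : ℕ) :
    δ (a ^ k) = 0 := by
  induction k with
  | zero => rw [pow_zero, hδ.map_one]
  | succ k ih => rw [pow_succ, hδ.map_mul_of_right_eq_zero _ ha, ih, zero_mul]

theorem map_list_prod_eq_zero (hδ : IsTwistedDerivation σ δ) {l : List A}
    (hl : ∀ a ∈ l, δ a = 0) : δ l.prod = 0 := by
  induction l with
  | nil => exact hδ.map_one
  | cons a l ih =>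
    rw [List.prod_cons, hδ.map_mul_of_left_eq_zero (hl a List.mem_cons_self),
      ih fun b hb => hl b (List.mem_cons_of_mem a hb), mul_zero]

theorem map_pow_mul_pow_eq_zero (hδ : IsTwistedDerivation σ δ) {a b : A}
    (hba : b * a = -(a * b)) (hσa : σ a = -b) (hσb : σ b = -a) (hδa : δ a = 1) (hδb : δ b = 1)
    (e : ℕ) : δ (a ^ e * b ^ e) = 0 := by
  induction e with
  | zero => simpa using hδ.map_one
  | succ e ih =>
    have hσ : σ (a ^ e * b ^ e) = b ^ e * a ^ e := by
      rw [map_mul, map_pow, map_pow, hσa, hσb, neg_pow' b, neg_pow a, mul_assoc,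
        ← mul_assoc ((-1) ^ e), ← pow_add, (Even.add_self e).neg_one_pow, one_mul]
    calc δ (a ^ (e + 1) * b ^ (e + 1)) = δ (a * ((a ^ e * b ^ e) * b)) := by
          rw [pow_succ', pow_succ]; simp only [mul_assoc]
      _ = (a ^ e * b ^ e) * b - b * (b ^ e * a ^ e) := by
          rw [hδ, hδa, hδ, ih, hσ, hδb, hσa]; noncomm_ring
      -- `b ^ (e + 1)` commutes with `a ^ e` because `e (e + 1)` is even
      _ = 0 := by
          rw [sub_eq_zero, ← mul_assoc, ← pow_succ', pow_mul_pow_of_mul_eq_neg hba,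
            (Nat.even_mul_succ_self e).neg_one_pow, one_mul, mul_assoc, ← pow_succ]

theorem map_pow_succ_mul_pow (hδ : IsTwistedDerivation σ δ) {a b : A}
    (hba : b * a = -(a * b)) (hσa : σ a = -b) (hσb : σ b = -a) (hδa : δ a = 1) (hδb : δ b = 1)
    (e : ℕ) : δ (a ^ (e + 1) * b ^ e) = a ^ e * b ^ e := by
  rw [pow_succ', mul_assoc, hδ, hδa, one_mul, hδ.map_pow_mul_pow_eq_zero hba hσa hσb hδa hδb e,
    mul_zero, add_zero]

end IsTwistedDerivation

theorem sum_range_sum_range_tsub (m : ℕ) :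
    ∑ t ∈ Finset.range m, ∑ i ∈ Finset.range t, (m - 1 - i) = m.choose 2 + 2 * m.choose 3 := by
  induction m with
  | zero => simp
  | succ m ih =>
    have hinner : ∀ t ∈ Finset.range (m + 1),
        ∑ i ∈ Finset.range t, (m + 1 - 1 - i) = ∑ i ∈ Finset.range t, (m - 1 - i) + t := by
      intro t ht
      rw [Finset.mem_range] at ht
      rw [Finset.sum_congr rfl (g := fun i => (m - 1 - i) + 1)
          (fun i hi => by rw [Finset.mem_range] at hi; omega),
        Finset.sum_add_distrib, Finset.sum_const, Finset.card_range, smul_eq_mul, mul_one]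
    have hreflect : ∑ i ∈ Finset.range m, (m - 1 - i) = m.choose 2 := by
      rw [Finset.sum_range_reflect (fun i => i) m, Finset.sum_range_id, Nat.choose_two_right]
    have h2 : (m + 1).choose 2 = m + m.choose 2 := by
      rw [Nat.choose_succ_succ, Nat.choose_one_right]
    have h3 : (m + 1).choose 3 = m.choose 2 + m.choose 3 := Nat.choose_succ_succ m 2
    rw [Finset.sum_congr rfl hinner, Finset.sum_add_distrib, Finset.sum_range_succ, ih, hreflect,
      Finset.sum_range_id, ← Nat.choose_two_right, h2, h3]
    omega

theorem opProd_cons {A : Type*} (f : A → A) (l : List (A → A)) :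
    opProd (f :: l) = f ∘ opProd l := rfl

theorem opProd_append {A : Type*} (l₁ l₂ : List (A → A)) :
    opProd (l₁ ++ l₂) = opProd l₁ ∘ opProd l₂ := by
  induction l₁ with
  | nil => rfl
  | cons f l ih => rw [List.cons_append, opProd_cons, opProd_cons, ih, Function.comp_assoc]

theorem opProd_commute {A : Type*} {l : List (A → A)} {g : A → A}
    (h : ∀ f ∈ l, Function.Commute f g) : Function.Commute (opProd l) g := by
  induction l with
  | nil => exact Function.Commute.id_left
  | cons f l ih =>
    exact (h f List.mem_cons_self).comp_left (ih fun f' hf' => h f' (List.mem_cons_of_mem f hf'))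

theorem lt_of_mem_w0List {m i : ℕ} (hi : i ∈ w0List m) : i + 1 < m := by
  induction m with
  | zero => simp [w0List] at hi
  | succ m ih =>
    rw [w0List, List.mem_append, List.mem_reverse, List.mem_range] at hi
    rcases hi with hi | hi
    · exact Nat.lt_succ_of_lt (ih hi)
    · omega

structure OddDividedDifferences {A : Type*} [Ring A] (n : ℕ) (x : ℕ → A) (σ : ℕ → A →+* A)
    (δ : ℕ → A → A) : Prop where
  anticomm : ∀ i j, i < n → j < n → i ≠ j → x i * x j = -(x j * x i)
  twist_gen : ∀ i j, i + 1 < n → j < n →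
    σ i (x j) = -x (if j = i then i + 1 else if j = i + 1 then i else j)
  diff_add : ∀ i, i + 1 < n → ∀ a b, δ i (a + b) = δ i a + δ i b
  diff_gen : ∀ i j, i + 1 < n → j < n → δ i (x j) = if j = i ∨ j = i + 1 then 1 else 0
  leibniz : ∀ i, i + 1 < n → IsTwistedDerivation (σ i) (δ i)

section Monomial

variable {A : Type*} [Ring A] (x : ℕ → A)

def monomial (e : ℕ → ℕ) (L : List ℕ) : A :=
  (L.map fun i => x i ^ e i).prod

@[simp]
theorem monomial_nil (e : ℕ → ℕ) : monomial x e [] = 1 := rfl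

@[simp]
theorem monomial_cons (e : ℕ → ℕ) (i : ℕ) (L : List ℕ) :
    monomial x e (i :: L) = x i ^ e i * monomial x e L := rfl

@[simp]
theorem monomial_append (e : ℕ → ℕ) (L L' : List ℕ) :
    monomial x e (L ++ L') = monomial x e L * monomial x e L' := by
  simp [monomial]

/-- `x_0^{m-1} ⋯ x_{j-1}^{m-j} · x_j^{m-j} x_{j+1}^{m-j-1} ⋯ x_m^0`: the staircase in `m + 1`
variables after `∂_0, …, ∂_{j-1}` have lowered its first `j` exponents. -/
def loweredStaircase (m j : ℕ) : A :=
  monomial x (fun i => m - 1 - i) (List.range j) *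
    monomial x (fun i => m - i) (List.range' j (m + 1 - j))

theorem loweredStaircase_zero (m : ℕ) : loweredStaircase x m 0 = xDeltaN (m + 1) x := by
  simp [loweredStaircase, monomial, xDeltaN, List.range_eq_range']

theorem loweredStaircase_self (m : ℕ) : loweredStaircase x m m = xDeltaN m x := by
  simp [loweredStaircase, monomial, xDeltaN]

end Monomial

namespace OddDividedDifferences

variable {A : Type*} [Ring A] {n : ℕ} {x : ℕ → A} {σ : ℕ → A →+* A} {δ : ℕ → A → A}

theorem diff_neg_one_pow_mul (H : OddDividedDifferences n x σ δ) {i : ℕ} (hi : i + 1 < n)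
    (k : ℕ) (a : A) : δ i ((-1) ^ k * a) = (-1) ^ k * δ i a :=
  map_neg_one_pow_mul (AddMonoidHom.mk' (δ i) (H.diff_add i hi)) k a

theorem twist_gen_of_ne (H : OddDividedDifferences n x σ δ) {i j : ℕ} (hi : i + 1 < n)
    (hj : j < n) (hji : j ≠ i) (hji' : j ≠ i + 1) : σ i (x j) = -x j := by
  rw [H.twist_gen i j hi hj, if_neg hji, if_neg hji']

theorem diff_gen_of_ne (H : OddDividedDifferences n x σ δ) {i j : ℕ} (hi : i + 1 < n)
    (hj : j < n) (hji : j ≠ i) (hji' : j ≠ i + 1) : δ i (x j) = 0 := by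
  rw [H.diff_gen i j hi hj, if_neg (by omega)]

theorem diff_monomial_eq_zero (H : OddDividedDifferences n x σ δ) {i : ℕ} (hi : i + 1 < n)
    {L : List ℕ} (hL : ∀ j ∈ L, j < n ∧ j ≠ i ∧ j ≠ i + 1) (e : ℕ → ℕ) :
    δ i (monomial x e L) = 0 := by
  refine (H.leibniz i hi).map_list_prod_eq_zero ?_
  simp only [List.mem_map]
  rintro _ ⟨j, hjL, rfl⟩
  obtain ⟨hj, hji, hji'⟩ := hL j hjL
  exact (H.leibniz i hi).map_pow_eq_zero (H.diff_gen_of_ne hi hj hji hji') _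

theorem twist_monomial (H : OddDividedDifferences n x σ δ) {i : ℕ} (hi : i + 1 < n)
    {L : List ℕ} (hL : ∀ j ∈ L, j < n ∧ j ≠ i ∧ j ≠ i + 1) (e : ℕ → ℕ) :
    σ i (monomial x e L) = (-1) ^ (L.map e).sum * monomial x e L := by
  induction L with
  | nil => simp [monomial]
  | cons j L ih =>
    obtain ⟨hj, hji, hji'⟩ := hL j List.mem_cons_self
    simp only [monomial, List.map_cons, List.prod_cons, List.sum_cons, map_mul, map_pow] at ih ⊢
    rw [ih fun k hk => hL k (List.mem_cons_of_mem j hk), H.twist_gen_of_ne hi hj hji hji', neg_pow]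
    rw [pow_add, mul_assoc, mul_assoc, ← mul_assoc (x j ^ e j),
      ((Commute.neg_one_right _).pow_right _).eq, mul_assoc]

theorem diff_pow_succ_mul_pow (H : OddDividedDifferences n x σ δ) {i : ℕ} (hi : i + 1 < n)
    (e : ℕ) : δ i (x i ^ (e + 1) * x (i + 1) ^ e) = x i ^ e * x (i + 1) ^ e :=
  (H.leibniz i hi).map_pow_succ_mul_pow (H.anticomm (i + 1) i hi (by omega) (by omega))
    (by simpa using H.twist_gen i i hi (by omega)) (by simp [H.twist_gen i (i + 1) hi hi])
    (by simp [H.diff_gen i i hi (by omega)]) (by simp [H.diff_gen i (i + 1) hi hi]) e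

theorem diff_loweredStaircase (H : OddDividedDifferences n x σ δ) {m j : ℕ} (hm : m < n)
    (hj : j < m) :
    δ j (loweredStaircase x m j) =
      (-1) ^ (∑ i ∈ Finset.range j, (m - 1 - i)) * loweredStaircase x m (j + 1) := by
  have hj1 : j + 1 < n := by omega
  set e := m - 1 - j
  set P := monomial x (fun i => m - 1 - i) (List.range j)
  set T := monomial x (fun i => m - i) (List.range' (j + 1 + 1) e)
  have hP : ∀ k ∈ List.range j, k < n ∧ k ≠ j ∧ k ≠ j + 1 := by
    simp only [List.mem_range]; omega
  have hT : ∀ k ∈ List.range' (j + 1 + 1) e, k < n ∧ k ≠ j ∧ k ≠ j + 1 := by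
    simp only [List.mem_range']; omega
  have hstage : loweredStaircase x m j = P * ((x j ^ (e + 1) * x (j + 1) ^ e) * T) := by
    rw [loweredStaircase, show m + 1 - j = e + 1 + 1 by omega, List.range'_succ, List.range'_succ,
      monomial_cons, monomial_cons, show m - j = e + 1 by omega, show m - (j + 1) = e by omega,
      mul_assoc]
  have hstage' : loweredStaircase x m (j + 1) = P * ((x j ^ e * x (j + 1) ^ e) * T) := by
    rw [loweredStaircase, show m + 1 - (j + 1) = e + 1 by omega, List.range'_succ, List.range_succ,
      monomial_append, monomial_cons, monomial_cons, monomial_nil, show m - (j + 1) = e by omega]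
    simp only [mul_one, mul_assoc]; rfl
  rw [hstage, (H.leibniz j hj1).map_mul_of_left_eq_zero (H.diff_monomial_eq_zero hj1 hP _),
    (H.leibniz j hj1).map_mul_of_right_eq_zero _ (H.diff_monomial_eq_zero hj1 hT _),
    H.diff_pow_succ_mul_pow hj1, H.twist_monomial hj1 hP, hstage', mul_assoc]
  rw [Finset.sum_eq_multiset_sum, Finset.range_val, Multiset.range, Multiset.map_coe,
    Multiset.sum_coe]

theorem opProd_loweredStaircase (H : OddDividedDifferences n x σ δ) {m j : ℕ} (hm : m < n)
    (hj : j ≤ m) :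
    opProd (((List.range j).reverse).map δ) (loweredStaircase x m 0) =
      (-1) ^ (∑ t ∈ Finset.range j, ∑ i ∈ Finset.range t, (m - 1 - i)) *
        loweredStaircase x m j := by
  induction j with
  | zero => simp [opProd]
  | succ j ih =>
    rw [List.range_succ, List.reverse_append, List.reverse_singleton, List.singleton_append,
      List.map_cons, opProd_cons, Function.comp_apply, ih (by omega),
      H.diff_neg_one_pow_mul (by omega), H.diff_loweredStaircase hm (by omega), ← mul_assoc,
      ← pow_add, Finset.sum_range_succ]

theorem opProd_w0List_xDeltaN (H : OddDividedDifferences n x σ δ) {m : ℕ} (hm : m ≤ n) :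
    opProd ((w0List m).map δ) (xDeltaN m x) = (-1) ^ m.choose 3 := by
  induction m with
  | zero => simp [opProd, xDeltaN, w0List]
  | succ m ih =>
    have hsign : ∀ k a, opProd ((w0List m).map δ) ((-1) ^ k * a) =
        (-1) ^ k * opProd ((w0List m).map δ) a := by
      refine fun k => opProd_commute ?_
      simp only [List.mem_map]
      rintro _ ⟨i, hi, rfl⟩ a
      exact H.diff_neg_one_pow_mul (by have := lt_of_mem_w0List hi; omega) k a
    have hexp : ∑ t ∈ Finset.range m, ∑ i ∈ Finset.range t, (m - 1 - i) + m.choose 3 =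
        (m + 1).choose 3 + 2 * m.choose 3 := by
      have h3 : (m + 1).choose 3 = m.choose 2 + m.choose 3 := Nat.choose_succ_succ m 2
      rw [sum_range_sum_range_tsub, h3]; omega
    rw [w0List, List.map_append, opProd_append, Function.comp_apply, ← loweredStaircase_zero,
      H.opProd_loweredStaircase (by omega) le_rfl, loweredStaircase_self, hsign, ih (by omega),
      ← pow_add, hexp, pow_add, pow_mul, neg_one_sq, one_pow, mul_one]

end OddDividedDifferences

/-- `x i` (`i < n`) are the odd generators of `OPol_n`; `σ i` is `s_i` composed with the parity
involution, so the twisted Leibniz rule is the odd Leibniz rule. -/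
theorem stmt4 {A : Type*} [Ring A] (n : ℕ) (x : ℕ → A)
    (hxx : ∀ i j, i < n → j < n → i ≠ j → x i * x j = -(x j * x i))
    (σ : ℕ → A →+* A)
    (hσx : ∀ i j, i + 1 < n → j < n →
      σ i (x j) = -x (if j = i then i + 1 else if j = i + 1 then i else j))
    (δ : ℕ → A → A)
    (hδ_add : ∀ i, i + 1 < n → ∀ a b, δ i (a + b) = δ i a + δ i b)
    (hδx : ∀ i j, i + 1 < n → j < n →
      δ i (x j) = if j = i ∨ j = i + 1 then 1 else 0)
    (hδ_leib : ∀ i, i + 1 < n → ∀ a b, δ i (a * b) = δ i a * b + σ i a * δ i b) :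
    opProd ((w0List n).map δ) (xDeltaN n x) = (-1 : A) ^ (n.choose 3) :=
  OddDividedDifferences.opProd_w0List_xDeltaN ⟨hxx, hσx, hδ_add, hδx, hδ_leib⟩ le_rfl
end

section
/- The element 𝚎_n := (−1)^{binom(n,3)} ∂_{w_0} x^δ of the odd nilHecke algebra ONH_n is an idempotent: 𝚎_n² = 𝚎_n. -/
/-- The element `𝚎_n = (−1)^{C(n,3)} ∂_{w_0} x^δ` of the odd nilHecke algebra. -/
noncomputable def onhIdem {A : Type*} [Ring A] (n : ℕ) (x D : ℕ → A) : A :=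
  (-1 : A) ^ (n.choose 3) * (((w0List n).map D).prod * xDeltaN n x)

namespace OddNilHecke

open Finset

section Signs

variable {A : Type*} [Ring A]

theorem pow_mul_of_anticomm {a b : A} (h : a * b = -(b * a)) (p : ℕ) :
    a ^ p * b = (-1 : ℤ) ^ p • (b * a ^ p) := by
  induction p with
  | zero => simp
  | succ p ih =>
    rw [pow_succ, mul_assoc, h, mul_neg, ← mul_assoc, ih, pow_succ, smul_mul_assoc, mul_assoc,
      mul_neg_one, neg_smul]

theorem mul_pow_of_anticomm {a b : A} (h : a * b = -(b * a)) (p : ℕ) :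
    (a * b) ^ p = (-1 : ℤ) ^ p.choose 2 • (a ^ p * b ^ p) := by
  induction p with
  | zero => simp
  | succ p ih =>
    have hba : b ^ p * a = (-1 : ℤ) ^ p • (a * b ^ p) :=
      pow_mul_of_anticomm (by rw [h, neg_neg]) p
    calc (a * b) ^ (p + 1) = (-1 : ℤ) ^ p.choose 2 • (a ^ p * ((b ^ p * a) * b)) := by
          rw [pow_succ, ih]; simp only [smul_mul_assoc, mul_assoc]
      _ = (-1 : ℤ) ^ (p + 1).choose 2 • (a ^ (p + 1) * b ^ (p + 1)) := by
          rw [hba, Nat.choose_succ_succ', Nat.choose_one_right, pow_add, pow_succ, pow_succ]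
          simp only [smul_mul_assoc, mul_smul_comm, smul_smul, mul_assoc, mul_comm]

theorem prod_map_mul_of_signed_comm {ι : Type*} (f : ι → A) (g : ι → ℕ) (c : A) (L : List ι)
    (h : ∀ i ∈ L, f i * c = (-1 : ℤ) ^ g i • (c * f i)) :
    (L.map f).prod * c = (-1 : ℤ) ^ (L.map g).sum • (c * (L.map f).prod) := by
  induction L with
  | nil => simp
  | cons i L ih =>
    simp only [List.map_cons, List.prod_cons, List.sum_cons, List.forall_mem_cons] at h ⊢
    rw [mul_assoc, ih h.2, mul_smul_comm, ← mul_assoc, h.1, pow_add, mul_comm, ← smul_smul,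
      smul_mul_assoc, mul_assoc]

end Signs

section TwoVariables

variable {A : Type*} [Ring A]

-- `u v` anticommutes with `d`, so `u (u v)^a d = ± u d (u v)^a`, which is `± (u v)^a` modulo `d A`.
theorem exists_pow_succ_mul_pow_mul_eq {u v d : A} (huv : u * v = -(v * u))
    (hud : u * d + d * v = 1) (hdu : d * u + v * d = 1) (a : ℕ) :
    ∃ z, u ^ (a + 1) * v ^ a * d = d * z + (-1 : ℤ) ^ a • (u ^ a * v ^ a) := by
  have hud' : u * d = 1 - d * v := eq_sub_of_add_eq hud
  have hvd : v * d = 1 - d * u := eq_sub_of_add_eq' hdu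
  have hw : u * v * d = -(d * (u * v)) := by
    calc u * v * d = u - (u * d) * u := by rw [mul_assoc, hvd, mul_sub, mul_one, mul_assoc]
      _ = d * (v * u) := by rw [hud']; noncomm_ring
      _ = -(d * (u * v)) := by rw [huv, mul_neg, neg_neg]
  have hmono : u ^ a * v ^ a = (-1 : ℤ) ^ a.choose 2 • (u * v) ^ a := by
    rw [mul_pow_of_anticomm huv, smul_smul, ← mul_pow]; simp
  refine ⟨-((-1 : ℤ) ^ (a.choose 2 + a) • (v * (u * v) ^ a)), ?_⟩
  calc u ^ (a + 1) * v ^ a * d = (-1 : ℤ) ^ a.choose 2 • (u * ((u * v) ^ a * d)) := by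
        rw [pow_succ', mul_assoc u, hmono, mul_smul_comm, smul_mul_assoc, mul_assoc]
    _ = (-1 : ℤ) ^ (a.choose 2 + a) • ((1 - d * v) * (u * v) ^ a) := by
        rw [pow_mul_of_anticomm hw, mul_smul_comm, smul_smul, ← pow_add, ← mul_assoc u d, hud']
    _ = _ := by
        rw [hmono, sub_mul, one_mul, smul_sub, smul_smul, ← pow_add, mul_assoc, mul_neg,
          mul_smul_comm, Nat.add_comm a]
        abel

end TwoVariables

section NilCoxeter

variable {A : Type*} [Ring A]

def dProd (D : ℕ → A) (w : List ℕ) : A := (w.map D).prod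

@[simp] theorem dProd_nil (D : ℕ → A) : dProd D [] = 1 := rfl

@[simp] theorem dProd_cons (D : ℕ → A) (i : ℕ) (w : List ℕ) :
    dProd D (i :: w) = D i * dProd D w := List.prod_cons

theorem dProd_append (D : ℕ → A) (w w' : List ℕ) :
    dProd D (w ++ w') = dProd D w * dProd D w' := by
  simp [dProd]

theorem reverse_range_succ (m : ℕ) :
    (List.range (m + 1)).reverse = m :: (List.range m).reverse := by
  simp [List.range_succ]

theorem dProd_mul_of_anticomm (D : ℕ → A) (c : A) (w : List ℕ)
    (h : ∀ i ∈ w, D i * c = -(c * D i)) :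
    dProd D w * c = (-1 : ℤ) ^ w.length • (c * dProd D w) := by
  simpa [dProd] using prod_map_mul_of_signed_comm D (fun _ => 1) c w (by simpa using h)

-- `D i` stands for the paper's `∂_{i+1}` (and `x i`, below, for `x_{i+1}`).
structure IsOddNilCoxeter (n : ℕ) (D : ℕ → A) : Prop where
  anticomm : ∀ i j, i + 1 < n → j + 1 < n → (i + 1 < j ∨ j + 1 < i) → D i * D j = -(D j * D i)
  sq_eq_zero : ∀ i, i + 1 < n → D i * D i = 0
  braid : ∀ i, i + 2 < n → D i * D (i + 1) * D i = D (i + 1) * D i * D (i + 1)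

variable {n : ℕ} {D : ℕ → A}

theorem IsOddNilCoxeter.dProd_reverse_range_mul_zero (h : IsOddNilCoxeter n D) {m : ℕ}
    (hm : 0 < m) (hmn : m < n) : dProd D (List.range m).reverse * D 0 = 0 := by
  induction m with
  | zero => omega
  | succ m ih =>
    rw [reverse_range_succ, dProd_cons, mul_assoc]
    rcases Nat.eq_zero_or_pos m with rfl | hm
    · simpa using h.sq_eq_zero 0 hmn
    · rw [ih hm (by omega), mul_zero]

theorem IsOddNilCoxeter.exists_dProd_reverse_range_mul_succ (h : IsOddNilCoxeter n D)
    {k m : ℕ} (hkm : k + 2 ≤ m) (hmn : m < n) :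
    ∃ c, dProd D (List.range m).reverse * D (k + 1) = D k * c := by
  induction m, hkm using Nat.le_induction with
  | base =>
    have hcomm := dProd_mul_of_anticomm D (D (k + 1)) (List.range k).reverse fun i hi => by
      simp only [List.mem_reverse, List.mem_range] at hi
      exact h.anticomm i (k + 1) (by omega) (by omega) (by omega)
    refine ⟨(-1 : ℤ) ^ k • (D (k + 1) * D k * dProd D (List.range k).reverse), ?_⟩
    rw [reverse_range_succ, reverse_range_succ, dProd_cons, dProd_cons, mul_assoc, mul_assoc,
      hcomm, List.length_reverse, List.length_range, mul_smul_comm, mul_smul_comm, mul_smul_comm]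
    congr 1
    simp only [← mul_assoc]
    rw [← h.braid k hmn]
  | succ m hkm ih =>
    obtain ⟨c, hc⟩ := ih (by omega)
    refine ⟨-(D m * c), ?_⟩
    rw [reverse_range_succ, dProd_cons, mul_assoc, hc, ← mul_assoc,
      h.anticomm m k (by omega) (by omega) (by omega), neg_mul, mul_assoc, mul_neg]

theorem IsOddNilCoxeter.dProd_w0List_mul_eq_zero (h : IsOddNilCoxeter n D) {m k : ℕ}
    (hmn : m ≤ n) (hk : k + 1 < m) : dProd D (w0List m) * D k = 0 := by
  induction m generalizing k with
  | zero => omega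
  | succ m ih =>
    rw [w0List, dProd_append, mul_assoc]
    cases k with
    | zero => rw [h.dProd_reverse_range_mul_zero (by omega) (by omega), mul_zero]
    | succ k =>
      obtain ⟨c, hc⟩ := h.exists_dProd_reverse_range_mul_succ (by omega : k + 2 ≤ m) (by omega)
      rw [hc, ← mul_assoc, ih (by omega) (by omega), zero_mul]

end NilCoxeter

section Monomial

variable {A : Type*} [Ring A] {x : ℕ → A}

def xMonomial (x : ℕ → A) (e : ℕ → ℕ) (L : List ℕ) : A := (L.map fun i => x i ^ e i).prod

@[simp] theorem xMonomial_cons (e : ℕ → ℕ) (i : ℕ) (L : List ℕ) :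
    xMonomial x e (i :: L) = x i ^ e i * xMonomial x e L := List.prod_cons

theorem xMonomial_append (e : ℕ → ℕ) (L L' : List ℕ) :
    xMonomial x e (L ++ L') = xMonomial x e L * xMonomial x e L' := by
  simp [xMonomial]

theorem xMonomial_congr {e e' : ℕ → ℕ} {L : List ℕ} (h : ∀ i ∈ L, e i = e' i) :
    xMonomial x e L = xMonomial x e' L :=
  congrArg List.prod (List.map_congr_left fun i hi => by rw [h i hi])

theorem xMonomial_mul_of_anticomm (e : ℕ → ℕ) (c : A) (L : List ℕ)
    (h : ∀ i ∈ L, x i * c = -(c * x i)) :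
    xMonomial x e L * c = (-1 : ℤ) ^ (L.map e).sum • (c * xMonomial x e L) :=
  prod_map_mul_of_signed_comm _ e c L fun i hi => pow_mul_of_anticomm (h i hi) (e i)

theorem range_eq_append_cons_cons {j n : ℕ} (hj : j + 1 < n) :
    List.range n = List.range j ++ j :: (j + 1) :: List.range' (j + 2) (n - (j + 2)) := by
  have htail : j :: (j + 1) :: List.range' (j + 2) (n - (j + 2)) = List.range' j (n - j) := by
    rw [show n - j = n - (j + 2) + 1 + 1 by omega]
    rfl
  rw [htail, List.range_eq_range', List.range_eq_range']
  simpa [show j + (n - j) = n by omega] using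
    (List.range'_append_1 (s := 0) (m := j) (n := n - j)).symm

theorem sum_Ico_eq_sum_range' (e : ℕ → ℕ) (a b : ℕ) :
    ∑ i ∈ Ico a b, e i = ((List.range' a (b - a)).map e).sum := by
  rw [Nat.Ico_eq_range']
  rfl

variable {D : ℕ → A}

theorem mul_xMonomial_mul_eq_of_mul_eq_zero {n j : ℕ} {P : A} {e e' : ℕ → ℕ} (hj : j + 1 < n)
    (hxx : x j * x (j + 1) = -(x (j + 1) * x j))
    (hDx : ∀ i < n, i ≠ j → i ≠ j + 1 → D j * x i = -(x i * D j))
    (hxD : x j * D j + D j * x (j + 1) = 1) (hDx' : D j * x j + x (j + 1) * D j = 1)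
    (hP : P * D j = 0) (he : e j = e (j + 1) + 1) (he'j : e' j = e (j + 1))
    (he' : ∀ i ≠ j, e' i = e i) :
    P * xMonomial x e (List.range n) * D j
      = (-1 : ℤ) ^ (∑ i ∈ Ico (j + 1) n, e i) • (P * xMonomial x e' (List.range n)) := by
  have hanti : ∀ i ∈ List.range j ++ List.range' (j + 2) (n - (j + 2)),
      x i * D j = -(D j * x i) := fun i hi => by
    simp only [List.mem_append, List.mem_range, List.mem_range'_1] at hi
    rw [hDx i (by omega) (by omega) (by omega), neg_neg]
  have hPre : xMonomial x e (List.range j) * D j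
      = (-1 : ℤ) ^ ((List.range j).map e).sum • (D j * xMonomial x e (List.range j)) :=
    xMonomial_mul_of_anticomm e (D j) _ fun i hi => hanti i (List.mem_append_left _ hi)
  have hSuf : xMonomial x e (List.range' (j + 2) (n - (j + 2))) * D j
      = (-1 : ℤ) ^ ((List.range' (j + 2) (n - (j + 2))).map e).sum •
          (D j * xMonomial x e (List.range' (j + 2) (n - (j + 2)))) :=
    xMonomial_mul_of_anticomm e (D j) _ fun i hi => hanti i (List.mem_append_right _ hi)
  have hPre' : xMonomial x e' (List.range j) = xMonomial x e (List.range j) :=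
    xMonomial_congr fun i hi => he' i (by simp only [List.mem_range] at hi; omega)
  have hSuf' : xMonomial x e' (List.range' (j + 2) (n - (j + 2)))
      = xMonomial x e (List.range' (j + 2) (n - (j + 2))) :=
    xMonomial_congr fun i hi => he' i (by simp only [List.mem_range'_1] at hi; omega)
  have hsign : ∑ i ∈ Ico (j + 1) n, e i
      = ((List.range' (j + 2) (n - (j + 2))).map e).sum + e (j + 1) := by
    rw [sum_Ico_eq_sum_range', show n - (j + 1) = n - (j + 2) + 1 by omega, List.range'_succ,
      List.map_cons, List.sum_cons, add_comm]
  rw [range_eq_append_cons_cons hj, xMonomial_append, xMonomial_append, xMonomial_cons,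
    xMonomial_cons, xMonomial_cons, xMonomial_cons, hPre', hSuf', he, he'j, he' (j + 1) (by omega),
    hsign, pow_add (-1 : ℤ), ← smul_smul]
  obtain ⟨z, hz⟩ := exists_pow_succ_mul_pow_mul_eq hxx hxD hDx' (e (j + 1))
  generalize e (j + 1) = b at hz ⊢
  generalize xMonomial x e (List.range j) = Pre at hPre ⊢
  generalize xMonomial x e (List.range' (j + 2) (n - (j + 2))) = Suf at hSuf ⊢
  have hPPre : P * Pre * D j = 0 := by
    rw [mul_assoc, hPre, mul_smul_comm, ← mul_assoc, hP, zero_mul, smul_zero]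
  calc P * (Pre * (x j ^ (b + 1) * (x (j + 1) ^ b * Suf))) * D j
      = (-1 : ℤ) ^ ((List.range' (j + 2) (n - (j + 2))).map e).sum •
          (P * Pre * (x j ^ (b + 1) * x (j + 1) ^ b * D j) * Suf) := by
        simp only [mul_assoc, hSuf, mul_smul_comm]
    _ = _ := by
        rw [hz, mul_add, add_mul, ← mul_assoc (P * Pre) (D j) z, hPPre]
        simp only [zero_mul, zero_add, mul_smul_comm, smul_mul_assoc, mul_assoc]

end Monomial

section Arithmetic

theorem sum_range_sub_one_sub (k : ℕ) : ∑ i ∈ range k, (k - 1 - i) = k.choose 2 := by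
  rw [sum_range_reflect (fun i => i) k, sum_range_id, Nat.choose_two_right]

theorem sum_range_choose_two (n : ℕ) : ∑ m ∈ range n, m.choose 2 = n.choose 3 := by
  induction n with
  | zero => rfl
  | succ n ih => rw [sum_range_succ, ih, Nat.choose_succ_succ' n 2, add_comm]

/-- The exponent of `x i` once the blocks `0, …, m - 1` of `w0List n` and the letters
`m - 1, …, j` of block `m` have been absorbed into `x^δ`: it is `n - m` for `i < j`,
`n - 1 - m` for `j ≤ i < m` and `n - 1 - i` for `m ≤ i`. -/
def sweepExp (n m j i : ℕ) : ℕ := if i < j then n - m else min (n - 1 - i) (n - 1 - m)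

theorem sum_Ico_sweepExp {n m j : ℕ} (hjm : j < m) (hmn : m < n) :
    ∑ i ∈ Ico (j + 1) n, sweepExp n m (j + 1) i
      = (m - 1 - j) * (n - 1 - m) + (n - m).choose 2 := by
  rw [← sum_Ico_consecutive _ (by omega : j + 1 ≤ m) hmn.le]
  have hlow : ∑ i ∈ Ico (j + 1) m, sweepExp n m (j + 1) i = (m - 1 - j) * (n - 1 - m) := by
    rw [sum_congr rfl fun i hi => show sweepExp n m (j + 1) i = n - 1 - m by
      simp only [mem_Ico] at hi; unfold sweepExp; split_ifs <;> omega]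
    rw [sum_const, Nat.card_Ico, smul_eq_mul]
    congr 1
    omega
  have hhigh : ∑ i ∈ Ico m n, sweepExp n m (j + 1) i = (n - m).choose 2 := by
    rw [sum_Ico_eq_sum_range, ← sum_range_sub_one_sub]
    exact sum_congr rfl fun k hk => by
      simp only [mem_range] at hk; unfold sweepExp; split_ifs <;> omega
  rw [hlow, hhigh]

def blockSignExp (n m : ℕ) : ℕ := (n - 1 - m) * m.choose 2 + m * (n - m).choose 2

theorem sum_range_sum_Ico_sweepExp {n m : ℕ} (hmn : m < n) :
    ∑ j ∈ range m, ∑ i ∈ Ico (j + 1) n, sweepExp n m (j + 1) i = blockSignExp n m := by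
  rw [sum_congr rfl fun j hj => sum_Ico_sweepExp (mem_range.1 hj) hmn, sum_add_distrib,
    ← sum_mul, sum_range_sub_one_sub, sum_const, card_range, smul_eq_mul, mul_comm, blockSignExp]

theorem sum_range_blockSignExp (n : ℕ) :
    ∑ m ∈ range n, blockSignExp n m = n.choose 3 + 2 * ∑ m ∈ range n, (n - 1 - m) * m.choose 2 := by
  have hreflect : ∑ m ∈ range n, m * (n - m).choose 2 = ∑ m ∈ range n, (n - m) * m.choose 2 := by
    calc ∑ m ∈ range n, m * (n - m).choose 2 = ∑ m ∈ range (n + 1), m * (n - m).choose 2 := by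
          simp [sum_range_succ]
      _ = ∑ m ∈ range (n + 1), (n - m) * m.choose 2 := by
          rw [← sum_range_reflect]
          exact sum_congr rfl fun m hm => by
            simp only [mem_range] at hm
            rw [show n + 1 - 1 - m = n - m by omega, show n - (n - m) = m by omega]
      _ = ∑ m ∈ range n, (n - m) * m.choose 2 := by simp [sum_range_succ]
  unfold blockSignExp
  rw [sum_add_distrib, hreflect, ← sum_range_choose_two, mul_sum, ← sum_add_distrib,
    ← sum_add_distrib]
  exact sum_congr rfl fun m hm => by
    rw [show n - m = n - 1 - m + 1 by simp only [mem_range] at hm; omega]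
    ring

end Arithmetic

section Sweep

variable {A : Type*} [Ring A]

structure IsOddNilHecke (n : ℕ) (x D : ℕ → A) : Prop extends IsOddNilCoxeter n D where
  x_anticomm : ∀ i j, i < n → j < n → i ≠ j → x i * x j = -(x j * x i)
  D_x_anticomm : ∀ i j, i + 1 < n → j < n → j ≠ i → j ≠ i + 1 → D i * x j = -(x j * D i)
  x_D_add_D_x : ∀ i, i + 1 < n → x i * D i + D i * x (i + 1) = 1
  D_x_add_x_D : ∀ i, i + 1 < n → D i * x i + x (i + 1) * D i = 1

variable {n : ℕ} {x D : ℕ → A}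

theorem IsOddNilHecke.absorb_letter (h : IsOddNilHecke n x D) {m j : ℕ} (hjm : j < m)
    (hmn : m < n) :
    dProd D (w0List n) * xMonomial x (sweepExp n m (j + 1)) (List.range n) * D j
      = (-1 : ℤ) ^ (∑ i ∈ Ico (j + 1) n, sweepExp n m (j + 1) i) •
          (dProd D (w0List n) * xMonomial x (sweepExp n m j) (List.range n)) :=
  mul_xMonomial_mul_eq_of_mul_eq_zero (by omega)
    (h.x_anticomm j (j + 1) (by omega) (by omega) (by omega))
    (fun i hi hij hij' => h.D_x_anticomm j i (by omega) hi hij hij')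
    (h.x_D_add_D_x j (by omega)) (h.D_x_add_x_D j (by omega))
    (h.dProd_w0List_mul_eq_zero le_rfl (by omega))
    (by unfold sweepExp; split_ifs <;> omega) (by unfold sweepExp; split_ifs <;> omega)
    (fun i hi => by unfold sweepExp; split_ifs <;> omega)

theorem IsOddNilHecke.absorb_block_prefix (h : IsOddNilHecke n x D) {m j : ℕ} (hjm : j ≤ m)
    (hmn : m < n) :
    dProd D (w0List n) * xMonomial x (sweepExp n m j) (List.range n) *
        dProd D (List.range j).reverse
      = (-1 : ℤ) ^ (∑ t ∈ range j, ∑ i ∈ Ico (t + 1) n, sweepExp n m (t + 1) i) •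
          (dProd D (w0List n) * xMonomial x (sweepExp n m 0) (List.range n)) := by
  induction j with
  | zero => simp
  | succ j ih =>
    rw [reverse_range_succ, dProd_cons, ← mul_assoc, h.absorb_letter (by omega) hmn,
      smul_mul_assoc, ih (by omega), smul_smul, ← pow_add, sum_range_succ, add_comm]

theorem IsOddNilHecke.absorb_block (h : IsOddNilHecke n x D) {m : ℕ} (hmn : m < n) :
    dProd D (w0List n) * xMonomial x (sweepExp n m m) (List.range n) *
        dProd D (List.range m).reverse
      = (-1 : ℤ) ^ blockSignExp n m •
          (dProd D (w0List n) * xMonomial x (sweepExp n (m + 1) (m + 1)) (List.range n)) := by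
  have hexp : sweepExp n m 0 = sweepExp n (m + 1) (m + 1) := by
    funext i; unfold sweepExp; split_ifs <;> omega
  rw [h.absorb_block_prefix le_rfl hmn, sum_range_sum_Ico_sweepExp hmn, hexp]

theorem IsOddNilHecke.absorb_w0List (h : IsOddNilHecke n x D) {k : ℕ} (hk : k ≤ n) :
    dProd D (w0List n) * xDeltaN n x * dProd D (w0List k)
      = (-1 : ℤ) ^ (∑ m ∈ range k, blockSignExp n m) •
          (dProd D (w0List n) * xMonomial x (sweepExp n k k) (List.range n)) := by
  induction k with
  | zero =>
    have hexp : sweepExp n 0 0 = fun i => n - 1 - i := by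
      funext i; simp [sweepExp]
    simp [hexp, w0List, xDeltaN, xMonomial]
  | succ k ih =>
    rw [w0List, dProd_append, ← mul_assoc, ih (by omega), smul_mul_assoc,
      h.absorb_block (by omega), smul_smul, ← pow_add, sum_range_succ]

theorem IsOddNilHecke.w0_mul_xDelta_mul_w0 (h : IsOddNilHecke n x D) :
    dProd D (w0List n) * xDeltaN n x * dProd D (w0List n)
      = (-1 : ℤ) ^ n.choose 3 • dProd D (w0List n) := by
  have hone : xMonomial x (sweepExp n n n) (List.range n) = 1 := by
    rw [xMonomial_congr (e' := fun _ => 0) fun i hi => by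
      simp [sweepExp, List.mem_range.1 hi]]
    simp [xMonomial]
  rw [h.absorb_w0List le_rfl, hone, mul_one, sum_range_blockSignExp, pow_add, pow_mul]
  simp

end Sweep

end OddNilHecke

/-- In the odd nilHecke algebra `ONH_n` (presented abstractly by
odd generators `x_1,…,x_n`, `∂_1,…,∂_{n−1}` and the odd nilHecke relations),
the element `𝚎_n := (−1)^{C(n,3)} ∂_{w_0} x^δ` is an idempotent: `𝚎_n² = 𝚎_n`. -/
theorem stmt5 {A : Type*} [Ring A] (n : ℕ) (x D : ℕ → A)
    (hxx : ∀ i j, i < n → j < n → i ≠ j → x i * x j = -(x j * x i))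
    (hDDdist : ∀ i j, i + 1 < n → j + 1 < n → (i + 1 < j ∨ j + 1 < i) →
      D i * D j = -(D j * D i))
    (hD2 : ∀ i, i + 1 < n → D i * D i = 0)
    (hbraid : ∀ i, i + 2 < n → D i * D (i + 1) * D i = D (i + 1) * D i * D (i + 1))
    (hDx : ∀ i j, i + 1 < n → j < n → j ≠ i → j ≠ i + 1 → D i * x j = -(x j * D i))
    (hmixa : ∀ i, i + 1 < n → x i * D i + D i * x (i + 1) = 1)
    (hmixb : ∀ i, i + 1 < n → D i * x i + x (i + 1) * D i = 1) :
    onhIdem n x D * onhIdem n x D = onhIdem n x D := by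
  have h : OddNilHecke.IsOddNilHecke n x D := ⟨⟨hDDdist, hD2, hbraid⟩, hxx, hDx, hmixa, hmixb⟩
  have hsign (y : A) : (-1 : A) ^ n.choose 3 * y = (-1 : ℤ) ^ n.choose 3 • y := by
    rw [zsmul_eq_mul]; push_cast; rfl
  have hmaster := h.w0_mul_xDelta_mul_w0
  simp only [OddNilHecke.dProd] at hmaster
  simp only [onhIdem, hsign, smul_mul_assoc, mul_smul_comm, smul_smul]
  rw [← mul_assoc _ _ (xDeltaN n x), hmaster, smul_mul_assoc, smul_smul, ← mul_pow, ← mul_pow]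
  norm_num
end

section
/- For any skew polynomial f ∈ OPol_n, the relation ∂_{w_0} f ∂_{w_0} = ∂_{w_0}(f) ∂_{w_0} holds in the odd nilHecke algebra ONH_n, where on the left f and ∂_{w_0} are multiplied as operators and on the right ∂_{w_0}(f) denotes the result of applying the longest odd divided difference operator to f. -/
section Anticommute

variable {A : Type*} [Ring A]

theorem List.mul_prod_of_anticomm {y : A} {L : List A} (h : ∀ z ∈ L, y * z = -(z * y)) :
    y * L.prod = (-1) ^ L.length * (L.prod * y) := by
  induction L with
  | nil => simp
  | cons z L ih =>
    have hz : Commute ((-1 : A) ^ L.length) z := (Commute.neg_one_left z).pow_left _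
    rw [prod_cons, ← mul_assoc, h z mem_cons_self, neg_mul, mul_assoc,
      ih fun z' hz' => h z' (mem_cons_of_mem z hz'), ← mul_assoc z, ← hz.eq, length_cons, pow_succ]
    simp only [mul_assoc, mul_neg, neg_mul, mul_one]

theorem List.prod_mul_of_anticomm {y : A} {L : List A} (h : ∀ z ∈ L, z * y = -(y * z)) :
    L.prod * y = (-1) ^ L.length * (y * L.prod) := by
  rw [mul_prod_of_anticomm fun z hz => by rw [h z hz, neg_neg], ← mul_assoc, ← pow_add,
    Even.neg_one_pow ⟨_, rfl⟩, one_mul]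

end Anticommute

theorem add_one_lt_of_mem_w0List {m a : ℕ} (h : a ∈ w0List m) : a + 1 < m := by
  induction m with
  | zero => simp [w0List] at h
  | succ m ih =>
    simp only [w0List, List.mem_append, List.mem_reverse, List.mem_range] at h
    rcases h with h | h
    · exact (ih h).trans m.lt_succ_self
    · omega

section NilCoxeter

variable {A : Type*} [Ring A] {n : ℕ} {D : ℕ → A}

def descProd (D : ℕ → A) (m : ℕ) : A := ((List.range m).reverse.map D).prod

theorem descProd_succ (m : ℕ) : descProd D (m + 1) = D m * descProd D m := by
  simp [descProd, List.range_succ]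

theorem prod_map_w0List_succ (m : ℕ) :
    ((w0List (m + 1)).map D).prod = ((w0List m).map D).prod * descProd D m := by
  simp [w0List, descProd]

theorem descProd_mul_D_succ
    (hDDdist : ∀ i j, i + 1 < n → j + 1 < n → (i + 1 < j ∨ j + 1 < i) →
      D i * D j = -(D j * D i)) {m : ℕ} (hm : m + 2 < n) :
    descProd D m * D (m + 1) = (-1) ^ m * (D (m + 1) * descProd D m) := by
  have h := List.prod_mul_of_anticomm (y := D (m + 1)) (L := (List.range m).reverse.map D)
    (by simp only [List.mem_map, List.mem_reverse, List.mem_range]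
        rintro _ ⟨a, ha, rfl⟩
        exact hDDdist a (m + 1) (by omega) hm (Or.inl (by omega)))
  simpa [descProd] using h

theorem descProd_mul_self
    (hDDdist : ∀ i j, i + 1 < n → j + 1 < n → (i + 1 < j ∨ j + 1 < i) →
      D i * D j = -(D j * D i))
    (hD2 : ∀ i, i + 1 < n → D i * D i = 0)
    (hbraid : ∀ i, i + 2 < n → D i * D (i + 1) * D i = D (i + 1) * D i * D (i + 1))
    {m : ℕ} (hm0 : 0 < m) (hmn : m < n) : descProd D m * descProd D m = 0 := by
  induction m, hm0 using Nat.le_induction with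
  | base => simpa [descProd] using hD2 0 hmn
  | succ k hk ih =>
    obtain ⟨k, rfl⟩ : ∃ j, k = j + 1 := ⟨k - 1, by omega⟩
    have hc : Commute ((-1 : A) ^ k) (D (k + 1) * D k) := (Commute.neg_one_left _).pow_left _
    calc descProd D (k + 2) * descProd D (k + 2)
        = D (k + 1) * D k * (descProd D k * D (k + 1)) * (D k * descProd D k) := by
          simp only [descProd_succ, mul_assoc]
      _ = (-1) ^ k * (D (k + 1) * D k * D (k + 1)) * (descProd D k * (D k * descProd D k)) := by
          rw [descProd_mul_D_succ hDDdist hmn, ← mul_assoc (D (k + 1) * D k), ← hc.eq]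
          simp only [mul_assoc]
      _ = (-1) ^ k * (D k * D (k + 1)) * (descProd D (k + 1) * descProd D (k + 1)) := by
          rw [← hbraid k hmn]
          simp only [descProd_succ, mul_assoc]
      _ = 0 := by rw [ih (by omega), mul_zero]

theorem D_mul_prod_map_w0List
    (hDDdist : ∀ i j, i + 1 < n → j + 1 < n → (i + 1 < j ∨ j + 1 < i) →
      D i * D j = -(D j * D i))
    (hD2 : ∀ i, i + 1 < n → D i * D i = 0)
    (hbraid : ∀ i, i + 2 < n → D i * D (i + 1) * D i = D (i + 1) * D i * D (i + 1))
    {m j : ℕ} (hmn : m ≤ n) (hjm : j + 1 < m) : D j * ((w0List m).map D).prod = 0 := by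
  induction m with
  | zero => omega
  | succ m ih =>
    rw [prod_map_w0List_succ, ← mul_assoc]
    rcases (show j + 1 < m ∨ j + 1 = m by omega) with hj | rfl
    · rw [ih (by omega) hj, zero_mul]
    have hanti := List.mul_prod_of_anticomm (y := D j) (L := (w0List j).map D)
      (by simp only [List.mem_map]
          rintro _ ⟨a, ha, rfl⟩
          have haj := add_one_lt_of_mem_w0List ha
          exact hDDdist j a (by omega) (by omega) (Or.inr haj))
    rw [prod_map_w0List_succ, ← mul_assoc, hanti, mul_assoc, mul_assoc, mul_assoc,
      ← mul_assoc (D j), ← descProd_succ,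
      descProd_mul_self (m := j + 1) hDDdist hD2 hbraid (by omega) (by omega), mul_zero, mul_zero]

end NilCoxeter

section TwistedDerivation

variable {A : Type*} [Ring A]

structure IsTwistedDerivation_s6 (s : A →+* A) (δ : A → A) : Prop where
  map_add' : ∀ a b, δ (a + b) = δ a + δ b
  leibniz : ∀ a b, δ (a * b) = δ a * b + s a * δ b

namespace IsTwistedDerivation_s6

variable {s : A →+* A} {δ : A → A}

theorem map_zero (hδ : IsTwistedDerivation_s6 s δ) : δ 0 = 0 :=
  _root_.map_zero (AddMonoidHom.mk' δ hδ.map_add')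

theorem map_neg (hδ : IsTwistedDerivation_s6 s δ) (a : A) : δ (-a) = -δ a :=
  _root_.map_neg (AddMonoidHom.mk' δ hδ.map_add') a

theorem map_one_s6 (hδ : IsTwistedDerivation_s6 s δ) : δ 1 = 0 := by
  simpa using hδ.leibniz 1 1

theorem mapsTo_closure (hδ : IsTwistedDerivation_s6 s δ) {G : Set A}
    (hsG : ∀ g ∈ G, s g ∈ Subring.closure G) (hδG : ∀ g ∈ G, δ g ∈ Subring.closure G) :
    Set.MapsTo δ (Subring.closure G) (Subring.closure G) := by
  intro f hf
  induction hf using Subring.closure_induction with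
  | mem g hg => exact hδG g hg
  | zero => simp [hδ.map_zero]
  | one => simp [hδ.map_one_s6]
  | add a b _ _ ha hb => simpa [hδ.map_add'] using add_mem ha hb
  | neg a _ ha => simpa [hδ.map_neg] using neg_mem ha
  | mul a b ha hb iha ihb =>
    have hsa : s a ∈ Subring.closure G :=
      (Subring.closure_le (t := (Subring.closure G).comap s)).2 hsG ha
    rw [hδ.leibniz]
    exact add_mem (mul_mem iha hb) (mul_mem hsa ihb)

theorem mul_eq_add_mul_of_mem_closure (hδ : IsTwistedDerivation_s6 s δ) {G : Set A} {d : A}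
    (hdG : ∀ g ∈ G, d * g = δ g + s g * d) {f : A} (hf : f ∈ Subring.closure G) :
    d * f = δ f + s f * d := by
  induction hf using Subring.closure_induction with
  | mem g hg => exact hdG g hg
  | zero => simp [hδ.map_zero]
  | one => simp [hδ.map_one_s6]
  | add a b _ _ ha hb =>
    rw [mul_add, ha, hb, hδ.map_add', map_add, add_mul]
    abel
  | neg a _ ha => rw [mul_neg, ha, hδ.map_neg, _root_.map_neg, neg_mul, neg_add]
  | mul a b _ _ ha hb =>
    calc d * (a * b) = (δ a + s a * d) * b := by rw [← ha, mul_assoc]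
      _ = δ a * b + s a * (δ b + s b * d) := by rw [← hb, add_mul, mul_assoc]
      _ = δ (a * b) + s (a * b) * d := by
        rw [hδ.leibniz, map_mul, mul_add]
        simp only [mul_assoc, add_assoc]

end IsTwistedDerivation_s6

end TwistedDerivation

theorem mapsTo_opProd_map {α ι : Type*} {δ : ι → α → α} {S : Set α} {l : List ι}
    (h : ∀ i ∈ l, Set.MapsTo (δ i) S S) : Set.MapsTo (opProd (l.map δ)) S S := by
  induction l with
  | nil => exact Set.mapsTo_id S
  | cons i l ih =>
    exact (h i List.mem_cons_self).comp (ih fun j hj => h j (List.mem_cons_of_mem i hj))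

theorem prod_map_mul_mul_eq_opProd_mul {A ι : Type*} [Ring A] {D : ι → A} {s δ : ι → A → A}
    {S : Set A} {w : A} {l : List ι} (hδS : ∀ i ∈ l, Set.MapsTo (δ i) S S)
    (hcomm : ∀ i ∈ l, ∀ f ∈ S, D i * f = δ i f + s i f * D i) (hw : ∀ i ∈ l, D i * w = 0)
    {f : A} (hf : f ∈ S) : (l.map D).prod * f * w = opProd (l.map δ) f * w := by
  induction l with
  | nil => simp [opProd]
  | cons i l ih =>
    have hl : ∀ j ∈ l, j ∈ i :: l := fun j hj => List.mem_cons_of_mem i hj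
    have hg : opProd (l.map δ) f ∈ S := mapsTo_opProd_map (fun j hj => hδS j (hl j hj)) hf
    calc (List.map D (i :: l)).prod * f * w = D i * (opProd (l.map δ) f * w) := by
          rw [← ih (fun j hj => hδS j (hl j hj)) (fun j hj => hcomm j (hl j hj))
            (fun j hj => hw j (hl j hj))]
          simp only [List.map_cons, List.prod_cons, mul_assoc]
      _ = δ i (opProd (l.map δ) f) * w := by
          rw [← mul_assoc, hcomm i List.mem_cons_self _ hg, add_mul, mul_assoc,
            hw i List.mem_cons_self, mul_zero, add_zero]

section OddNilHecke

variable {A : Type*} [Ring A] {n : ℕ} {x D : ℕ → A}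

theorem D_mul_x {σ : ℕ → A →+* A} {δ : ℕ → A → A}
    (hDx : ∀ i j, i + 1 < n → j < n → j ≠ i → j ≠ i + 1 → D i * x j = -(x j * D i))
    (hmixa : ∀ i, i + 1 < n → x i * D i + D i * x (i + 1) = 1)
    (hmixb : ∀ i, i + 1 < n → D i * x i + x (i + 1) * D i = 1)
    (hσx : ∀ i j, i + 1 < n → j < n →
      σ i (x j) = -x (if j = i then i + 1 else if j = i + 1 then i else j))
    (hδx : ∀ i j, i + 1 < n → j < n →
      δ i (x j) = if j = i ∨ j = i + 1 then 1 else 0)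
    {i j : ℕ} (hi : i + 1 < n) (hj : j < n) : D i * x j = δ i (x j) + σ i (x j) * D i := by
  rw [hδx i j hi hj, hσx i j hi hj]
  by_cases hji : j = i
  · subst hji
    simp only [true_or, ↓reduceIte, neg_mul, ← hmixb j hi, add_neg_cancel_right]
  by_cases hji' : j = i + 1
  · subst hji'
    simp only [hji, or_true, ↓reduceIte, neg_mul, ← hmixa i hi, add_neg_cancel_comm]
  simp [hji, hji', hDx i j hi hj hji hji']

theorem sigma_x_mem_closure {σ : ℕ → A →+* A}
    (hσx : ∀ i j, i + 1 < n → j < n →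
      σ i (x j) = -x (if j = i then i + 1 else if j = i + 1 then i else j))
    {i j : ℕ} (hi : i + 1 < n) (hj : j < n) : σ i (x j) ∈ Subring.closure (x '' Set.Iio n) := by
  rw [hσx i j hi hj]
  refine neg_mem (Subring.subset_closure ⟨_, ?_, rfl⟩)
  simp only [Set.mem_Iio]
  split_ifs <;> omega

theorem delta_x_mem_closure {δ : ℕ → A → A}
    (hδx : ∀ i j, i + 1 < n → j < n →
      δ i (x j) = if j = i ∨ j = i + 1 then 1 else 0)
    {i j : ℕ} (hi : i + 1 < n) (hj : j < n) : δ i (x j) ∈ Subring.closure (x '' Set.Iio n) := by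
  rw [hδx i j hi hj]
  split_ifs
  exacts [one_mem _, zero_mem _]

end OddNilHecke

theorem stmt6_general {A : Type*} [Ring A] (n : ℕ) (x D : ℕ → A)
    (hDDdist : ∀ i j, i + 1 < n → j + 1 < n → (i + 1 < j ∨ j + 1 < i) →
      D i * D j = -(D j * D i))
    (hD2 : ∀ i, i + 1 < n → D i * D i = 0)
    (hbraid : ∀ i, i + 2 < n → D i * D (i + 1) * D i = D (i + 1) * D i * D (i + 1))
    (hDx : ∀ i j, i + 1 < n → j < n → j ≠ i → j ≠ i + 1 → D i * x j = -(x j * D i))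
    (hmixa : ∀ i, i + 1 < n → x i * D i + D i * x (i + 1) = 1)
    (hmixb : ∀ i, i + 1 < n → D i * x i + x (i + 1) * D i = 1)
    (σ : ℕ → A →+* A)
    (hσx : ∀ i j, i + 1 < n → j < n →
      σ i (x j) = -x (if j = i then i + 1 else if j = i + 1 then i else j))
    (δ : ℕ → A → A)
    (hδ_add : ∀ i, i + 1 < n → ∀ a b, δ i (a + b) = δ i a + δ i b)
    (hδx : ∀ i j, i + 1 < n → j < n →
      δ i (x j) = if j = i ∨ j = i + 1 then 1 else 0)
    (hδ_leib : ∀ i, i + 1 < n → ∀ a b, δ i (a * b) = δ i a * b + σ i a * δ i b) :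
    ∀ f ∈ Subring.closure (x '' Set.Iio n),
      ((w0List n).map D).prod * f * ((w0List n).map D).prod =
        opProd ((w0List n).map δ) f * ((w0List n).map D).prod := by
  intro f hf
  have hw0 : ∀ i ∈ w0List n, i + 1 < n := fun _ => add_one_lt_of_mem_w0List
  have htw : ∀ i ∈ w0List n, IsTwistedDerivation_s6 (σ i) (δ i) :=
    fun i hi => ⟨hδ_add i (hw0 i hi), hδ_leib i (hw0 i hi)⟩
  refine prod_map_mul_mul_eq_opProd_mul (s := fun i => σ i) (fun i hi => ?_) (fun i hi g hg => ?_)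
    (fun i hi => D_mul_prod_map_w0List hDDdist hD2 hbraid le_rfl (hw0 i hi)) hf
  · exact (htw i hi).mapsTo_closure
      (by rintro _ ⟨j, hj, rfl⟩; exact sigma_x_mem_closure hσx (hw0 i hi) hj)
      (by rintro _ ⟨j, hj, rfl⟩; exact delta_x_mem_closure hδx (hw0 i hi) hj)
  · exact (htw i hi).mul_eq_add_mul_of_mem_closure
      (by rintro _ ⟨j, hj, rfl⟩; exact D_mul_x hDx hmixa hmixb hσx hδx (hw0 i hi) hj) hg

/-- In the odd nilHecke algebra `ONH_n` (presented abstractly by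
odd generators `x i`, `D i` and the odd nilHecke relations), for every skew
polynomial `f` (an element of the subring generated by the `x i`) one has
`∂_{w_0} · f · ∂_{w_0} = ∂_{w_0}(f) · ∂_{w_0}`, where on the left `f` and the
element `∂_{w_0} = D`-word are multiplied in `ONH_n` and on the right
`∂_{w_0}(f)` is the result of applying the longest odd divided difference
operator (the composite of the operators `δ i`) to `f`. -/
theorem stmt6 {A : Type*} [Ring A] (n : ℕ) (x D : ℕ → A)
    (hxx : ∀ i j, i < n → j < n → i ≠ j → x i * x j = -(x j * x i))
    (hDDdist : ∀ i j, i + 1 < n → j + 1 < n → (i + 1 < j ∨ j + 1 < i) →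
      D i * D j = -(D j * D i))
    (hD2 : ∀ i, i + 1 < n → D i * D i = 0)
    (hbraid : ∀ i, i + 2 < n → D i * D (i + 1) * D i = D (i + 1) * D i * D (i + 1))
    (hDx : ∀ i j, i + 1 < n → j < n → j ≠ i → j ≠ i + 1 → D i * x j = -(x j * D i))
    (hmixa : ∀ i, i + 1 < n → x i * D i + D i * x (i + 1) = 1)
    (hmixb : ∀ i, i + 1 < n → D i * x i + x (i + 1) * D i = 1)
    (σ : ℕ → A →+* A)
    (hσx : ∀ i j, i + 1 < n → j < n →
      σ i (x j) = -x (if j = i then i + 1 else if j = i + 1 then i else j))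
    (δ : ℕ → A → A)
    (hδ_add : ∀ i, i + 1 < n → ∀ a b, δ i (a + b) = δ i a + δ i b)
    (hδx : ∀ i j, i + 1 < n → j < n →
      δ i (x j) = if j = i ∨ j = i + 1 then 1 else 0)
    (hδ_leib : ∀ i, i + 1 < n → ∀ a b, δ i (a * b) = δ i a * b + σ i a * δ i b) :
    ∀ f ∈ Subring.closure (x '' Set.Iio n),
      ((w0List n).map D).prod * f * ((w0List n).map D).prod =
        opProd ((w0List n).map δ) f * ((w0List n).map D).prod :=
  stmt6_general n x D hDDdist hD2 hbraid hDx hmixa hmixb σ hσx δ hδ_add hδx hδ_leib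
end

section
/- In the odd nilHecke algebra ONH_2 equipped with the differential determined by d(x) = x², d(y) = y², d(∂) = 1 (where x = x_1, y = x_2, ∂ = ∂_1), the Leibniz-compatibility d(∂·v) = d(∂)·v − ∂·d(v) holds on the skew polynomial representation OPol_2 with cyclic vector 1 satisfying d(1) = x·1; in particular, on monomials: d(∂(x^{2k}·1)) + ∂(d(x^{2k}·1)) = x^{2k}·1 for all k ≥ 0. -/
/-- Consider `OPol_2 = k⟨x,y⟩/(xy + yx)` (presented abstractly:
`X`, `Y` odd anticommuting generators, `ι` the parity involution, `d` the odd
derivation with `d X = X²`, `d Y = Y²`), viewed as the skew polynomial module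
over `ONH_2` with cyclic vector `1` satisfying `d(1) = X·1`; thus the module
differential is `D_M(f) = d f + ι(f)·X`.  Let `P` be the action of the odd
divided difference operator `∂ = ∂_1` (additive, `P X = P Y = 1`, twisted
Leibniz rule via `σ : X ↦ −Y, Y ↦ −X`).  Then the Leibniz compatibility
`d(∂·v) = d(∂)·v − ∂·d(v)` with `d(∂) = 1` holds on the module, i.e.
`D_M(P v) + P(D_M v) = v` for all `v`; in particular, on monomials,
`d(∂(x^{2k}·1)) + ∂(d(x^{2k}·1)) = x^{2k}·1` for all `k ≥ 0`. -/
theorem stmt7 {A : Type*} [Ring A] (X Y : A)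
    (hXY : X * Y = -(Y * X))
    (ι : A →+* A) (hιX : ι X = -X) (hιY : ι Y = -Y)
    (d : A → A)
    (hd_add : ∀ a b, d (a + b) = d a + d b)
    (hd_leib : ∀ a b, d (a * b) = d a * b + ι a * d b)
    (hdX : d X = X ^ 2) (hdY : d Y = Y ^ 2)
    (σ : A →+* A) (hσX : σ X = -Y) (hσY : σ Y = -X)
    (P : A → A)
    (hP_add : ∀ a b, P (a + b) = P a + P b)
    (hPX : P X = 1) (hPY : P Y = 1)
    (hP_leib : ∀ a b, P (a * b) = P a * b + σ a * P b) :
    (∀ f ∈ Subring.closure ({X, Y} : Set A),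
        (d (P f) + ι (P f) * X) + P (d f + ι f * X) = f)
      ∧ ∀ k : ℕ,
        (d (P (X ^ (2 * k))) + ι (P (X ^ (2 * k))) * X) +
            P (d (X ^ (2 * k)) + ι (X ^ (2 * k)) * X) = X ^ (2 * k) := by
  -- basic consequences of additivity / Leibniz
  have hd0 : d 0 = 0 := by
    have h := hd_add 0 0; rw [add_zero] at h; exact (left_eq_add.mp h)
  have hP0 : P 0 = 0 := by
    have h := hP_add 0 0; rw [add_zero] at h; exact (left_eq_add.mp h)
  have hd1 : d 1 = 0 := by
    have h := hd_leib 1 1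
    rw [one_mul, mul_one, map_one, one_mul] at h
    exact (left_eq_add.mp h)
  have hP1 : P 1 = 0 := by
    have h := hP_leib 1 1
    rw [one_mul, mul_one, map_one, one_mul] at h
    exact (left_eq_add.mp h)
  have hd_neg : ∀ a, d (-a) = -(d a) := by
    intro a
    have h := hd_add a (-a); rw [add_neg_cancel, hd0] at h
    exact (neg_eq_of_add_eq_zero_right h.symm).symm
  have hP_neg : ∀ a, P (-a) = -(P a) := by
    intro a
    have h := hP_add a (-a); rw [add_neg_cancel, hP0] at h
    exact (neg_eq_of_add_eq_zero_right h.symm).symm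
  have hPiX : ∀ a : A, P (ι a * X) = P (ι a) * X + σ (ι a) := by
    intro a; rw [hP_leib, hPX, mul_one]
  -- ι and σ commute on the closure
  have hcomm : ∀ f ∈ Subring.closure ({X, Y} : Set A), ι (σ f) = σ (ι f) := by
    intro f hf
    induction hf using Subring.closure_induction with
    | mem z hz =>
      simp only [Set.mem_insert_iff, Set.mem_singleton_iff] at hz
      rcases hz with rfl | rfl
      · simp [hσX, hιX, hιY]
      · simp [hσY, hιY, hιX]
    | zero => simp
    | one => simp
    | add x y hx hy ihx ihy => rw [map_add, map_add, map_add, map_add, ihx, ihy]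
    | neg x hx ihx => rw [map_neg, map_neg, map_neg, map_neg, ihx]
    | mul x y hx hy ihx ihy => rw [map_mul, map_mul, map_mul, map_mul, ihx, ihy]
  -- the main induction: Leibniz compatibility plus two auxiliary identities
  have main : ∀ f ∈ Subring.closure ({X, Y} : Set A),
      ((d (P f) + ι (P f) * X) + P (d f + ι f * X) = f)
      ∧ (ι (P f) + P (ι f) = 0) ∧ (d (σ f) + σ (d f) = 0) := by
    intro f hf
    induction hf using Subring.closure_induction with
    | mem z hz =>
      simp only [Set.mem_insert_iff, Set.mem_singleton_iff] at hz
      rcases hz with h | h <;> rw [h]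
      · refine ⟨?_, ?_, ?_⟩
        · rw [hPX, hd1, map_one, one_mul, hdX, hιX, pow_two, neg_mul,
            add_neg_cancel, hP0, zero_add, add_zero]
        · rw [hPX, map_one, hιX, hP_neg, hPX]; exact add_neg_cancel 1
        · rw [hσX, hd_neg, hdY, hdX, map_pow, hσX, neg_sq]
          exact neg_add_cancel _
      · refine ⟨?_, ?_, ?_⟩
        · rw [hPY, hd1, map_one, one_mul, hιY, hdY, pow_two,
            (show Y * Y + -Y * X = Y * Y + (-Y) * X from rfl),
            hP_add, hP_leib Y Y, hP_leib (-Y) X, hPY, hP_neg, hPY, hσY,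
            hPX, map_neg, hσY, neg_neg]
          noncomm_ring
        · rw [hPY, map_one, hιY, hP_neg, hPY]; exact add_neg_cancel 1
        · rw [hσY, hd_neg, hdX, hdY, map_pow, hσY, neg_sq]
          exact neg_add_cancel _
    | zero => refine ⟨?_, ?_, ?_⟩ <;> simp [hP0, hd0]
    | one =>
      refine ⟨?_, ?_, ?_⟩
      · simp [hP1, hd0, hd1, hPX]
      · simp [hP1]
      · simp [hd1]
    | add x y hx hy ihx ihy =>
      obtain ⟨q1, r1, s1⟩ := ihx
      obtain ⟨q2, r2, s2⟩ := ihy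
      refine ⟨?_, ?_, ?_⟩
      · have harg : d x + d y + (ι x * X + ι y * X)
            = (d x + ι x * X) + (d y + ι y * X) := by abel
        calc d (P (x + y)) + ι (P (x + y)) * X + P (d (x + y) + ι (x + y) * X)
            = (d (P x) + ι (P x) * X + P (d x + ι x * X))
              + (d (P y) + ι (P y) * X + P (d y + ι y * X)) := by
              rw [hP_add, hd_add, map_add, hd_add, map_add, add_mul (ι x) (ι y) X, harg,
                hP_add]
              noncomm_ring
          _ = x + y := by rw [q1, q2]
      · calc ι (P (x + y)) + P (ι (x + y))
            = (ι (P x) + P (ι x)) + (ι (P y) + P (ι y)) := by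
              rw [hP_add, map_add, map_add, hP_add]; abel
          _ = 0 := by rw [r1, r2]; rw [add_zero]
      · calc d (σ (x + y)) + σ (d (x + y))
            = (d (σ x) + σ (d x)) + (d (σ y) + σ (d y)) := by
              rw [map_add, hd_add, hd_add, map_add]; abel
          _ = 0 := by rw [s1, s2]; rw [add_zero]
    | neg x hx ihx =>
      obtain ⟨q1, r1, s1⟩ := ihx
      refine ⟨?_, ?_, ?_⟩
      · have harg : d (-x) + ι (-x) * X = -(d x + ι x * X) := by
          rw [hd_neg, map_neg]; noncomm_ring
        calc d (P (-x)) + ι (P (-x)) * X + P (d (-x) + ι (-x) * X)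
            = -(d (P x) + ι (P x) * X + P (d x + ι x * X)) := by
              rw [hP_neg, hd_neg, map_neg, harg, hP_neg]; noncomm_ring
          _ = -x := by rw [q1]
      · calc ι (P (-x)) + P (ι (-x))
            = -(ι (P x) + P (ι x)) := by
              rw [hP_neg, map_neg, map_neg, hP_neg]; abel
          _ = 0 := by rw [r1, neg_zero]
      · calc d (σ (-x)) + σ (d (-x))
            = -(d (σ x) + σ (d x)) := by
              rw [map_neg, hd_neg, hd_neg, map_neg]; abel
          _ = 0 := by rw [s1, neg_zero]
    | mul x y hx hy ihx ihy =>
      obtain ⟨q1, r1, s1⟩ := ihx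
      obtain ⟨q2, r2, s2⟩ := ihy
      rw [hP_add, hPiX] at q1 q2
      have hcx : ι (σ x) = σ (ι x) := hcomm x hx
      have e1 : ι (P x) = -P (ι x) := eq_neg_of_add_eq_zero_left r1
      have e2 : ι (P y) = -P (ι y) := eq_neg_of_add_eq_zero_left r2
      have e3 : d (σ x) = -σ (d x) := eq_neg_of_add_eq_zero_left s1
      have e4 : d (σ y) = -σ (d y) := eq_neg_of_add_eq_zero_left s2
      have dq1 : d (P x)
          = x - (P (d x) + (P (ι x) * X + σ (ι x))) - ι (P x) * X :=
        eq_sub_of_add_eq (eq_sub_of_add_eq q1)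
      have dq2 : d (P y)
          = y - (P (d y) + (P (ι y) * X + σ (ι y))) - ι (P y) * X :=
        eq_sub_of_add_eq (eq_sub_of_add_eq q2)
      refine ⟨?_, ?_, ?_⟩
      · rw [hP_leib x y, hd_add, hd_leib (P x) y, hd_leib (σ x) (P y),
          map_add, map_mul, map_mul, hd_leib x y, map_mul, hP_add,
          hP_add, hP_leib (d x) y, hP_leib (ι x) (d y),
          hP_leib (ι x * ι y) X, hP_leib (ι x) (ι y), map_mul, hPX, mul_one]
        rw [dq1, dq2, e1, e2, e3, hcx]
        noncomm_ring
      · rw [hP_leib x y, map_add, map_mul, map_mul, map_mul,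
          hP_leib (ι x) (ι y)]
        rw [e1, e2, hcx]
        noncomm_ring
      · rw [map_mul, hd_leib (σ x) (σ y), hd_leib x y, map_add, map_mul,
          map_mul]
        rw [e3, e4, hcx]
        noncomm_ring
  refine ⟨fun f hf => (main f hf).1, fun k => ?_⟩
  exact (main _ (pow_mem (Subring.subset_closure (by simp)) _)).1
end

section
/- In the odd nilHecke algebra ONH_n with the local differential d(x_i) = x_i², d(∂_i) = 1, the differential of the longest divided difference operator is d(∂_{w_0}) = Σ_{i=1}^n {i−1} x_i ∂_{w_0} − (−1)^{binom(n,2)} Σ_{i=1}^n {n−i} ∂_{w_0} x_i, where {m} = 0 if m even, 1 if m odd. -/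
section ONH
variable {A : Type*} [Ring A]
def fallD (D : ℕ → A) (a : ℕ) : ℕ → A
  | 0 => 1
  | k+1 => D (a+k) * fallD D a k
@[simp] lemma fallD_zero (D : ℕ → A) (a : ℕ) : fallD D a 0 = 1 := rfl
lemma fallD_succ (D : ℕ → A) (a k : ℕ) : fallD D a (k+1) = D (a+k) * fallD D a k := rfl
lemma fallD_add (D : ℕ → A) (a k m : ℕ) :
    fallD D a (k + m) = fallD D (a + k) m * fallD D a k := by
  induction m with
  | zero => simp
  | succ m ih =>
      have h1 : k + (m+1) = (k + m) + 1 := by omega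
      rw [h1, fallD_succ, ih, fallD_succ, mul_assoc]
      congr 2
      omega
lemma fallD_range (D : ℕ → A) (n : ℕ) :
    ((List.range n).reverse.map D).prod = fallD D 0 n := by
  induction n with
  | zero => simp
  | succ n ih =>
      rw [List.range_succ, List.reverse_append]
      simp [fallD_succ, ih, ← List.map_reverse]
lemma P_succ (D : ℕ → A) (n : ℕ) :
    ((w0List (n+1)).map D).prod = ((w0List n).map D).prod * fallD D 0 n := by
  rw [show w0List (n+1) = w0List n ++ (List.range n).reverse from rfl]
  rw [List.map_append, List.prod_append, fallD_range]
lemma comm_fallD (D : ℕ → A) (y : A) (a k : ℕ)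
    (h : ∀ m, m < k → D (a+m) * y = -(y * D (a+m))) :
    y * fallD D a k = ((-1:ℤ)^k) • (fallD D a k * y) := by
  induction k with
  | zero => simp
  | succ k ih =>
      have hy : y * D (a+k) = -(D (a+k) * y) := by
        rw [h k (by omega), neg_neg]
      rw [fallD_succ, ← mul_assoc, hy, neg_mul, mul_assoc,
        ih (fun m hm => h m (by omega)), mul_smul_comm, pow_succ, mul_comm ((-1:ℤ)^k),
        mul_smul, ← mul_assoc, neg_smul, one_smul]
lemma fallD_comm (D : ℕ → A) (y : A) (a k : ℕ)
    (h : ∀ m, m < k → D (a+m) * y = -(y * D (a+m))) :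
    fallD D a k * y = ((-1:ℤ)^k) • (y * fallD D a k) := by
  rw [comm_fallD D y a k h, smul_smul, ← pow_add]
  rw [show ((-1:ℤ))^(k+k) = 1 from Even.neg_one_pow (Even.add_self k), one_smul]

-- new part
lemma fallD_mul_D (D : ℕ → A) (N j k : ℕ) (hN : j+2+k < N)
    (hDDdist : ∀ i j', i + 1 < N → j' + 1 < N → (i + 1 < j' ∨ j' + 1 < i) →
      D i * D j' = -(D j' * D i))
    (hbraid : ∀ i, i + 2 < N → D i * D (i + 1) * D i = D (i + 1) * D i * D (i + 1)) :
    fallD D 0 (j+2+k) * D (j+1) = ((-1:ℤ)^(j+k)) • (D j * fallD D 0 (j+2+k)) := by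
  have e1 : fallD D 0 (j+2+k) = fallD D (j+2) k * (D (j+1) * (D j * fallD D 0 j)) := by
    rw [show j+2+k = (j+2)+k from rfl, fallD_add]
    simp only [Nat.zero_add]
    rw [show fallD D 0 (j+2) = D (j+1) * (D j * fallD D 0 j) by
      rw [fallD_succ, fallD_succ]; simp]
  have c1 : fallD D 0 j * D (j+1) = ((-1:ℤ)^j) • (D (j+1) * fallD D 0 j) :=
    fallD_comm D (D (j+1)) 0 j (fun m hm =>
      hDDdist (0+m) (j+1) (by omega) (by omega) (by omega))
  have c2 : fallD D (j+2) k * D j = ((-1:ℤ)^k) • (D j * fallD D (j+2) k) :=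
    fallD_comm D (D j) (j+2) k (fun m hm =>
      hDDdist (j+2+m) j (by omega) (by omega) (by omega))
  have hb : D (j+1) * (D j * (D (j+1) * fallD D 0 j))
      = D j * (D (j+1) * (D j * fallD D 0 j)) := by
    have h := (hbraid j (by omega)).symm
    calc D (j+1) * (D j * (D (j+1) * fallD D 0 j))
        = (D (j+1) * D j * D (j+1)) * fallD D 0 j := by simp only [mul_assoc]
      _ = (D j * D (j+1) * D j) * fallD D 0 j := by rw [h]
      _ = D j * (D (j+1) * (D j * fallD D 0 j)) := by simp only [mul_assoc]
  calc fallD D 0 (j+2+k) * D (j+1)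
      = fallD D (j+2) k * (D (j+1) * (D j * (fallD D 0 j * D (j+1)))) := by
        rw [e1]; simp only [mul_assoc]
    _ = ((-1:ℤ)^j) • (fallD D (j+2) k * (D (j+1) * (D j * (D (j+1) * fallD D 0 j)))) := by
        rw [c1]; simp only [mul_smul_comm]
    _ = ((-1:ℤ)^j) • (fallD D (j+2) k * (D j * (D (j+1) * (D j * fallD D 0 j)))) := by
        rw [hb]
    _ = ((-1:ℤ)^j) • ((fallD D (j+2) k * D j) * (D (j+1) * (D j * fallD D 0 j))) := by
        simp only [mul_assoc]
    _ = ((-1:ℤ)^(j+k)) • (D j * fallD D 0 (j+2+k)) := by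
        rw [c2, smul_mul_assoc, smul_smul, ← pow_add, e1]
        simp only [mul_assoc]

lemma PD (D : ℕ → A) (N : ℕ)
    (hDDdist : ∀ i j', i + 1 < N → j' + 1 < N → (i + 1 < j' ∨ j' + 1 < i) →
      D i * D j' = -(D j' * D i))
    (hD2 : ∀ i, i + 1 < N → D i * D i = 0)
    (hbraid : ∀ i, i + 2 < N → D i * D (i + 1) * D i = D (i + 1) * D i * D (i + 1)) :
    ∀ n, n ≤ N → ∀ j, j + 1 < n → ((w0List n).map D).prod * D j = 0 := by
  intro n
  induction n with
  | zero => intro _ j hj; omega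
  | succ n ih =>
      intro hn j hj
      rw [P_succ, mul_assoc]
      match j with
      | 0 =>
          have hn1 : 1 ≤ n := by omega
          obtain ⟨k, rfl⟩ : ∃ k, n = 1 + k := ⟨n - 1, by omega⟩
          rw [fallD_add, show fallD D 0 1 = D 0 * 1 from rfl]
          rw [mul_one, mul_assoc, hD2 0 (by omega), mul_zero, mul_zero]
      | j'+1 =>
          obtain ⟨k, rfl⟩ : ∃ k, n = j'+2+k := ⟨n - (j'+2), by omega⟩
          rw [fallD_mul_D D N j' k (by omega) hDDdist hbraid, mul_smul_comm,
            ← mul_assoc, ih (by omega) j' (by omega), zero_mul, smul_zero]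
end ONH

section ONH2
variable {A : Type*} [Ring A]

lemma P_Qhat (D : ℕ → A) (N : ℕ)
    (hDDdist : ∀ i j', i + 1 < N → j' + 1 < N → (i + 1 < j' ∨ j' + 1 < i) →
      D i * D j' = -(D j' * D i))
    (hD2 : ∀ i, i + 1 < N → D i * D i = 0)
    (hbraid : ∀ i, i + 2 < N → D i * D (i + 1) * D i = D (i + 1) * D i * D (i + 1))
    (n i : ℕ) (hn : n < N) (h1 : 1 ≤ i) (h2 : i < n) :
    ((w0List n).map D).prod * (fallD D (i+1) (n-1-i) * fallD D 0 i) = 0 := by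
  obtain ⟨i', rfl⟩ : ∃ i', i = i' + 1 := ⟨i - 1, by omega⟩
  have e0 : fallD D 0 (i'+1) = D i' * fallD D 0 i' := by
    rw [fallD_succ]; simp
  have c : fallD D (i'+2) (n-1-(i'+1)) * D i' =
      ((-1:ℤ)^(n-1-(i'+1))) • (D i' * fallD D (i'+2) (n-1-(i'+1))) :=
    fallD_comm D (D i') (i'+2) _ (fun m hm =>
      hDDdist (i'+2+m) i' (by omega) (by omega) (by omega))
  have key : fallD D (i'+2) (n-1-(i'+1)) * fallD D 0 (i'+1) =
      ((-1:ℤ)^(n-1-(i'+1))) • (D i' * (fallD D (i'+2) (n-1-(i'+1)) * fallD D 0 i')) := by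
    rw [e0, ← mul_assoc, c, smul_mul_assoc, mul_assoc]
  rw [show i'+1+1 = i'+2 from rfl, key, mul_smul_comm, ← mul_assoc,
    PD D N hDDdist hD2 hbraid n (by omega) i' (by omega), zero_mul, smul_zero]

lemma iota_fallD (D : ℕ → A) (ι : A →+* A) (a k : ℕ)
    (h : ∀ m, m < k → ι (D (a+m)) = -D (a+m)) :
    ι (fallD D a k) = ((-1:ℤ)^k) • fallD D a k := by
  induction k with
  | zero => simp
  | succ k ih =>
      rw [fallD_succ, map_mul, h k (by omega), ih (fun m hm => h m (by omega)),
        mul_smul_comm, neg_mul, smul_neg, pow_succ, mul_neg_one, neg_smul]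

lemma iota_P (D : ℕ → A) (ι : A →+* A) (N : ℕ)
    (hιD : ∀ i, i + 1 < N → ι (D i) = -D i) :
    ∀ n, n ≤ N → ι (((w0List n).map D).prod) = ((-1:ℤ)^(n.choose 2)) • ((w0List n).map D).prod := by
  intro n
  induction n with
  | zero => intro _; simp [w0List]
  | succ n ih =>
      intro hn
      rw [P_succ, map_mul, ih (by omega),
        iota_fallD D ι 0 n (fun m hm => hιD (0+m) (by omega)),
        smul_mul_assoc, mul_smul_comm, smul_smul, ← pow_add]
      congr 1
      have hc : (n+1).choose 2 = n + n.choose 2 := by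
        simp [Nat.choose_succ_succ]
      rw [hc]
      congr 1
      omega

lemma xQtop (x D : ℕ → A) (N n : ℕ) (hn : n + 1 < N)
    (hDx : ∀ i j, i + 1 < N → j < N → j ≠ i → j ≠ i + 1 → D i * x j = -(x j * D i))
    (hmixa : ∀ i, i + 1 < N → x i * D i + D i * x (i + 1) = 1) :
    x n * fallD D 0 (n+1) = fallD D 0 n - ((-1:ℤ)^n) • (fallD D 0 (n+1) * x (n+1)) := by
  have e0 : fallD D 0 (n+1) = D n * fallD D 0 n := by rw [fallD_succ]; simp
  have hm : x n * D n = 1 - D n * x (n+1) := eq_sub_of_add_eq (hmixa n hn)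
  have c : x (n+1) * fallD D 0 n = ((-1:ℤ)^n) • (fallD D 0 n * x (n+1)) :=
    comm_fallD D (x (n+1)) 0 n (fun m hm' =>
      hDx (0+m) (n+1) (by omega) (by omega) (by omega) (by omega))
  rw [e0, ← mul_assoc, hm, sub_mul, one_mul, mul_assoc, c, mul_smul_comm, ← mul_assoc]

lemma xQmid (x D : ℕ → A) (N i k : ℕ) (hN : i + 1 + k < N)
    (hDx : ∀ i j, i + 1 < N → j < N → j ≠ i → j ≠ i + 1 → D i * x j = -(x j * D i))
    (hmixa : ∀ i, i + 1 < N → x i * D i + D i * x (i + 1) = 1) :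
    x i * fallD D 0 (i+1+k) =
      ((-1:ℤ)^k) • (fallD D (i+1) k * fallD D 0 i) +
      ((-1:ℤ)^(i+k+1)) • (fallD D 0 (i+1+k) * x (i+1)) := by
  have e1 : fallD D 0 (i+1+k) = fallD D (i+1) k * (D i * fallD D 0 i) := by
    rw [show i+1+k = (i+1)+k from rfl, fallD_add]
    simp only [Nat.zero_add]
    rw [show fallD D 0 (i+1) = D i * fallD D 0 i by rw [fallD_succ]; simp]
  have c1 : x i * fallD D (i+1) k = ((-1:ℤ)^k) • (fallD D (i+1) k * x i) :=
    comm_fallD D (x i) (i+1) k (fun m hm =>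
      hDx (i+1+m) i (by omega) (by omega) (by omega) (by omega))
  have hm : x i * D i = 1 - D i * x (i+1) := eq_sub_of_add_eq (hmixa i (by omega))
  have c2 : x (i+1) * fallD D 0 i = ((-1:ℤ)^i) • (fallD D 0 i * x (i+1)) :=
    comm_fallD D (x (i+1)) 0 i (fun m hm' =>
      hDx (0+m) (i+1) (by omega) (by omega) (by omega) (by omega))
  calc x i * fallD D 0 (i+1+k)
      = (x i * fallD D (i+1) k) * (D i * fallD D 0 i) := by rw [e1, ← mul_assoc]
    _ = ((-1:ℤ)^k) • (fallD D (i+1) k * ((x i * D i) * fallD D 0 i)) := by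
        rw [c1, smul_mul_assoc, mul_assoc, ← mul_assoc (x i)]
    _ = ((-1:ℤ)^k) • (fallD D (i+1) k * (fallD D 0 i - D i * (x (i+1) * fallD D 0 i))) := by
        rw [hm, sub_mul, one_mul, mul_assoc]
    _ = ((-1:ℤ)^k) • (fallD D (i+1) k * fallD D 0 i -
          ((-1:ℤ)^i) • (fallD D 0 (i+1+k) * x (i+1))) := by
        rw [c2, mul_smul_comm, mul_sub, mul_smul_comm]
        congr 3
        rw [e1]
        simp only [mul_assoc]
    _ = ((-1:ℤ)^k) • (fallD D (i+1) k * fallD D 0 i) +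
        ((-1:ℤ)^(i+k+1)) • (fallD D 0 (i+1+k) * x (i+1)) := by
        rw [smul_sub, smul_smul, sub_eq_add_neg, ← neg_smul]
        congr 2
        rw [show i+k+1 = (k+i)+1 by omega, pow_succ, mul_neg_one, ← pow_add]

lemma xnQ (x D : ℕ → A) (N : ℕ)
    (hmixb : ∀ i, i + 1 < N → D i * x i + x (i + 1) * D i = 1) :
    ∀ n, n < N → x n * fallD D 0 n =
      (∑ j ∈ Finset.range n, ((-1:ℤ)^(n-1-j)) • (fallD D (j+1) (n-1-j) * fallD D 0 j)) +
      ((-1:ℤ)^n) • (fallD D 0 n * x 0) := by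
  intro n
  induction n with
  | zero => intro _; simp
  | succ n ih =>
      intro hn
      have e0 : fallD D 0 (n+1) = D n * fallD D 0 n := by rw [fallD_succ]; simp
      have hm : x (n+1) * D n = 1 - D n * x n := by
        have h := hmixb n hn
        have := eq_sub_of_add_eq ((add_comm (D n * x n) (x (n+1) * D n)) ▸ h)
        exact this
      rw [e0, ← mul_assoc, hm, sub_mul, one_mul, mul_assoc, ih (by omega), mul_add,
        Finset.mul_sum]
      have hterm : ∀ j ∈ Finset.range n,
          D n * (((-1:ℤ)^(n-1-j)) • (fallD D (j+1) (n-1-j) * fallD D 0 j)) =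
          -(((-1:ℤ)^(n-j)) • (fallD D (j+1) (n-j) * fallD D 0 j)) := by
        intro j hj
        rw [Finset.mem_range] at hj
        rw [mul_smul_comm, ← mul_assoc,
          show D n * fallD D (j+1) (n-1-j) = fallD D (j+1) (n-j) by
            rw [show n-j = (n-1-j)+1 by omega, fallD_succ,
              show j+1+(n-1-j) = n by omega],
          show n-j = (n-1-j)+1 by omega, pow_succ, mul_neg_one, neg_smul, neg_neg]
      rw [Finset.sum_congr rfl hterm]
      rw [mul_smul_comm, ← mul_assoc, ← e0]
      rw [Finset.sum_range_succ]
      rw [show (n+1)-1-n = 0 by omega, show n+1-1 = n by omega]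
      simp only [pow_zero, one_smul, fallD_zero, one_mul]
      rw [show ((-1:ℤ)^(n+1)) = -((-1:ℤ)^n) by rw [pow_succ, mul_neg_one], neg_smul,
        Finset.sum_neg_distrib]
      abel

lemma x_P (x D : ℕ → A) (N : ℕ)
    (hDx : ∀ i j, i + 1 < N → j < N → j ≠ i → j ≠ i + 1 → D i * x j = -(x j * D i)) :
    ∀ n j, n ≤ j → j < N →
      x j * ((w0List n).map D).prod =
        ((-1:ℤ)^(n.choose 2)) • (((w0List n).map D).prod * x j) := by
  intro n
  induction n with
  | zero => intro j _ _; simp [w0List]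
  | succ n ih =>
      intro j hnj hjN
      have c : x j * fallD D 0 n = ((-1:ℤ)^n) • (fallD D 0 n * x j) :=
        comm_fallD D (x j) 0 n (fun m hm =>
          hDx (0+m) j (by omega) (by omega) (by omega) (by omega))
      have hc : (n+1).choose 2 = n + n.choose 2 := by
        simp [Nat.choose_succ_succ]
      rw [P_succ, ← mul_assoc, ih j (by omega) hjN, smul_mul_assoc, mul_assoc, c,
        mul_smul_comm, smul_smul, ← pow_add, ← mul_assoc, hc, Nat.add_comm (n.choose 2) n]

lemma d_one (ι : A →+* A) (d : A → A)
    (hd_leib : ∀ a b, d (a * b) = d a * b + ι a * d b) : d 1 = 0 := by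
  have h := hd_leib 1 1
  rw [mul_one, mul_one, map_one, one_mul] at h
  exact (left_eq_add.mp h)

lemma d_fallD (x D : ℕ → A) (ι : A →+* A) (d : A → A) (N : ℕ)
    (hDx : ∀ i j, i + 1 < N → j < N → j ≠ i → j ≠ i + 1 → D i * x j = -(x j * D i))
    (hmixa : ∀ i, i + 1 < N → x i * D i + D i * x (i + 1) = 1)
    (hιD : ∀ i, i + 1 < N → ι (D i) = -D i)
    (hd_leib : ∀ a b, d (a * b) = d a * b + ι a * d b)
    (hdD : ∀ i, i + 1 < N → d (D i) = 1) :
    ∀ n, n < N → d (fallD D 0 n) =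
      (∑ i ∈ Finset.range n, x i * fallD D 0 n) +
      ((-1:ℤ)^(n+1)) • ∑ i ∈ Finset.range n, fallD D 0 n * x (i+1) := by
  intro n
  induction n with
  | zero => intro _; simp [d_one ι d hd_leib]
  | succ n ih =>
      intro hn
      have e0 : fallD D 0 (n+1) = D n * fallD D 0 n := by rw [fallD_succ]; simp
      have hterm1 : ∀ i ∈ Finset.range n,
          D n * (x i * fallD D 0 n) = -(x i * fallD D 0 (n+1)) := by
        intro i hi
        rw [Finset.mem_range] at hi
        rw [← mul_assoc, hDx n i hn (by omega) (by omega) (by omega), neg_mul,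
          mul_assoc, ← e0]
      have hterm2 : ∀ i ∈ Finset.range n,
          D n * (fallD D 0 n * x (i+1)) = fallD D 0 (n+1) * x (i+1) := by
        intro i hi
        rw [← mul_assoc, ← e0]
      have hfn : fallD D 0 n = x n * fallD D 0 (n+1) +
          ((-1:ℤ)^n) • (fallD D 0 (n+1) * x (n+1)) :=
        sub_eq_iff_eq_add.mp (xQtop x D N n hn hDx hmixa).symm
      rw [e0, hd_leib, hdD n hn, one_mul, hιD n hn, ih (by omega), neg_mul, mul_add,
        Finset.mul_sum, Finset.sum_congr rfl hterm1, mul_smul_comm, Finset.mul_sum,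
        Finset.sum_congr rfl hterm2, Finset.sum_neg_distrib, ← e0]
      rw [Finset.sum_range_succ, Finset.sum_range_succ (f := fun i => fallD D 0 (n+1) * x (i+1))]
      rw [hfn]
      rw [show ((-1:ℤ)^(n+1+1)) = (-1:ℤ)^n by
          rw [show n+1+1 = n+2 from rfl, pow_add]; norm_num,
        show ((-1:ℤ)^(n+1)) = -((-1:ℤ)^n) by rw [pow_succ, mul_neg_one]]
      simp only [smul_add, neg_smul]
      abel

lemma epair (m : ℕ) (z : A) :
    z = (if Even m then (0:A) else 1) * z + (if Even (m+1) then (0:A) else 1) * z := by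
  rcases Nat.even_or_odd m with h|h
  · simp [h, Nat.even_add_one]
  · simp [h, Nat.even_add_one, Nat.not_even_iff_odd.mpr h]

lemma eminus (m : ℕ) (z : A) :
    (if Even (m+1) then (0:A) else 1) * z - z = -((if Even m then (0:A) else 1) * z) := by
  rcases Nat.even_or_odd m with h|h
  · simp [h, Nat.even_add_one]
  · simp [h, Nat.even_add_one, Nat.not_even_iff_odd.mpr h]
end ONH2

theorem stmt8_aux {A : Type*} [Ring A] :
    ∀ (n : ℕ) (x D : ℕ → A)
    (_ : ∀ i j, i + 1 < n → j + 1 < n → (i + 1 < j ∨ j + 1 < i) → D i * D j = -(D j * D i))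
    (_ : ∀ i, i + 1 < n → D i * D i = 0)
    (_ : ∀ i, i + 2 < n → D i * D (i + 1) * D i = D (i + 1) * D i * D (i + 1))
    (_ : ∀ i j, i + 1 < n → j < n → j ≠ i → j ≠ i + 1 → D i * x j = -(x j * D i))
    (_ : ∀ i, i + 1 < n → x i * D i + D i * x (i + 1) = 1)
    (_ : ∀ i, i + 1 < n → D i * x i + x (i + 1) * D i = 1)
    (ι : A →+* A) (_ : ∀ i, i + 1 < n → ι (D i) = -D i)
    (d : A → A) (_ : ∀ a b, d (a * b) = d a * b + ι a * d b)
    (_ : ∀ i, i + 1 < n → d (D i) = 1),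
    d (((w0List n).map D).prod) =
      (∑ i ∈ Finset.range n, (if Even i then (0 : A) else 1) *
          (x i * ((w0List n).map D).prod)) -
        ((-1 : ℤ) ^ (n.choose 2)) •
          ∑ i ∈ Finset.range n, (if Even (n - 1 - i) then (0 : A) else 1) *
            (((w0List n).map D).prod * x i) := by
  intro n
  induction n with
  | zero =>
      intro x D _ _ _ _ _ _ ι _ d hd_leib _
      simp [w0List, d_one ι d hd_leib]
  | succ n IH =>
      intro x D hDDdist hD2 hbraid hDx hmixa hmixb ι hιD d hd_leib hdD
      by_cases hn0 : n = 0
      · subst hn0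
        have h1 : w0List 1 = [] := by simp [w0List]
        rw [h1]
        simp [d_one ι d hd_leib]
      have hn1 : 1 ≤ n := by omega
      have IH' := IH x D
        (fun i j hi hj hij => hDDdist i j (by omega) (by omega) hij)
        (fun i hi => hD2 i (by omega)) (fun i hi => hbraid i (by omega))
        (fun i j hi hj h1 h2 => hDx i j (by omega) (by omega) h1 h2)
        (fun i hi => hmixa i (by omega)) (fun i hi => hmixb i (by omega))
        ι (fun i hi => hιD i (by omega)) d hd_leib (fun i hi => hdD i (by omega))
      have hiP := iota_P D ι (n+1) hιD n (by omega)
      have hdQ := d_fallD x D ι d (n+1) hDx hmixa hιD hd_leib hdD n (by omega)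
      -- pointwise expansion of x i * Q
      have hx : ∀ i, i < n → x i * fallD D 0 n =
          ((-1:ℤ)^(n-1-i)) • (fallD D (i+1) (n-1-i) * fallD D 0 i) +
          ((-1:ℤ)^n) • (fallD D 0 n * x (i+1)) := by
        intro i hi
        have h := xQmid x D (n+1) i (n-1-i) (by omega) hDx hmixa
        rw [show i+1+(n-1-i) = n by omega] at h
        rw [show i+(n-1-i)+1 = n by omega] at h
        exact h
      -- x n commutes to the expansion via the hat-sum
      have hxnQ := xnQ x D (n+1) hmixb n (by omega)
      have hsum : (∑ j ∈ Finset.range n, ((w0List n).map D).prod *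
            (((-1:ℤ)^(n-1-j)) • (fallD D (j+1) (n-1-j) * fallD D 0 j)))
          = ((-1:ℤ)^(n-1)) • (((w0List n).map D).prod * (fallD D 1 (n-1) * fallD D 0 0)) := by
        rw [Finset.sum_eq_single_of_mem 0 (Finset.mem_range.mpr hn1)]
        · rw [mul_smul_comm]
          norm_num
        · intro i hi hne
          rw [mul_smul_comm,
            P_Qhat D (n+1) hDDdist hD2 hbraid n i (by omega) (by omega)
              (Finset.mem_range.mp hi), smul_zero]
      have hPQ0 : ((w0List n).map D).prod * (x n * fallD D 0 n)
          = ((-1:ℤ)^(n-1)) • (((w0List n).map D).prod * (fallD D 1 (n-1) * fallD D 0 0))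
            + ((-1:ℤ)^n) • (((w0List n).map D).prod * (fallD D 0 n * x 0)) := by
        rw [hxnQ, mul_add, Finset.mul_sum, hsum, mul_smul_comm]
      have hxP := x_P x D (n+1) hDx n n le_rfl (by omega)
      have hxP' : x n * (((w0List n).map D).prod * fallD D 0 n)
          = ((-1:ℤ)^(n.choose 2)) • (((w0List n).map D).prod * (x n * fallD D 0 n)) := by
        rw [← mul_assoc, hxP, smul_mul_assoc, mul_assoc]
      have hbox : ((-1:ℤ)^(n.choose 2)) • (((-1:ℤ)^(n-1)) •
            (((w0List n).map D).prod * (fallD D 1 (n-1) * fallD D 0 0)))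
          = x n * (((w0List n).map D).prod * fallD D 0 n)
            - ((-1:ℤ)^(n.choose 2) * (-1:ℤ)^n) •
              (((w0List n).map D).prod * (fallD D 0 n * x 0)) := by
        rw [hxP', hPQ0]
        simp only [smul_add, smul_smul]
        abel
      have hQhat : ∀ i ∈ Finset.range n, i ≠ 0 →
          ((-1:ℤ)^(n-1-i)) • ((if Even (n-i) then (0:A) else 1) *
            (((w0List n).map D).prod * (fallD D (i+1) (n-1-i) * fallD D 0 i))) = 0 := by
        intro i hi hne
        rw [P_Qhat D (n+1) hDDdist hD2 hbraid n i (by omega) (by omega)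
          (Finset.mem_range.mp hi), mul_zero, smul_zero]
      have hc2 : (n+1).choose 2 = n + n.choose 2 := by
        simp [Nat.choose_succ_succ]
      have he1 : ((-1:ℤ)^((n+1).choose 2)) = (-1:ℤ)^(n.choose 2) * (-1:ℤ)^n := by
        rw [hc2, pow_add, mul_comm]
      rw [P_succ D n, hd_leib, IH', hiP, hdQ, he1]
      simp only [sub_mul, Finset.sum_mul, smul_mul_assoc, mul_add, Finset.mul_sum,
        mul_smul_comm, smul_smul, mul_assoc]
      simp only [← Finset.smul_sum, smul_smul]
      have hsplit : ∑ i ∈ Finset.range n,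
            ((w0List n).map D).prod * (x i * fallD D 0 n)
          = (∑ i ∈ Finset.range n, (if Even (n-1-i) then (0:A) else 1) *
              (((w0List n).map D).prod * (x i * fallD D 0 n)))
            + ∑ i ∈ Finset.range n, (if Even (n-i) then (0:A) else 1) *
              (((w0List n).map D).prod * (x i * fallD D 0 n)) := by
        rw [← Finset.sum_add_distrib]
        refine Finset.sum_congr rfl fun i hi => ?_
        rw [Finset.mem_range] at hi
        have h := epair (n-1-i) (((w0List n).map D).prod * (x i * fallD D 0 n))
        rw [show n-1-i+1 = n-i by omega] at h
        exact h
      have hexp : ∑ i ∈ Finset.range n, (if Even (n-i) then (0:A) else 1) *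
            (((w0List n).map D).prod * (x i * fallD D 0 n))
          = (∑ i ∈ Finset.range n, ((-1:ℤ)^(n-1-i)) • ((if Even (n-i) then (0:A) else 1) *
              (((w0List n).map D).prod * (fallD D (i+1) (n-1-i) * fallD D 0 i))))
            + ∑ i ∈ Finset.range n, ((-1:ℤ)^n) • ((if Even (n-i) then (0:A) else 1) *
              (((w0List n).map D).prod * (fallD D 0 n * x (i+1)))) := by
        rw [← Finset.sum_add_distrib]
        refine Finset.sum_congr rfl fun i hi => ?_
        rw [Finset.mem_range] at hi
        rw [hx i hi, mul_add, mul_add]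
        simp only [mul_smul_comm]
      have hhat : ∑ i ∈ Finset.range n, ((-1:ℤ)^(n-1-i)) •
            ((if Even (n-i) then (0:A) else 1) *
              (((w0List n).map D).prod * (fallD D (i+1) (n-1-i) * fallD D 0 i)))
          = ((-1:ℤ)^(n-1)) • ((if Even n then (0:A) else 1) *
              (((w0List n).map D).prod * (fallD D 1 (n-1) * fallD D 0 0))) := by
        rw [Finset.sum_eq_single_of_mem 0 (Finset.mem_range.mpr hn1) hQhat]
        norm_num
      rw [hsplit, hexp, hhat]
      simp only [smul_add, smul_smul, ← Finset.smul_sum]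
      have hboxe := congrArg (fun z => (if Even n then (0:A) else 1) * z) hbox
      simp only [mul_sub, mul_smul_comm, smul_smul] at hboxe
      rw [hboxe]
      have hsgn : ((-1:ℤ)^(n+1) * (-1:ℤ)^(n.choose 2))
          = -((-1:ℤ)^(n.choose 2) * (-1:ℤ)^n) := by
        rw [pow_succ]; ring
      have htail' : ((-1:ℤ)^(n+1) * (-1:ℤ)^(n.choose 2)) •
            (∑ i ∈ Finset.range n, ((w0List n).map D).prod * (fallD D 0 n * x (i+1)))
          = -(((-1:ℤ)^(n.choose 2) * (-1:ℤ)^n) •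
              ∑ i ∈ Finset.range n, (if Even (n-1-i) then (0:A) else 1) *
                (((w0List n).map D).prod * (fallD D 0 n * x (i+1))))
            - ((-1:ℤ)^(n.choose 2) * (-1:ℤ)^n) •
              ∑ i ∈ Finset.range n, (if Even (n-i) then (0:A) else 1) *
                (((w0List n).map D).prod * (fallD D 0 n * x (i+1))) := by
        have hz : ∀ i ∈ Finset.range n,
            ((w0List n).map D).prod * (fallD D 0 n * x (i+1))
            = (if Even (n-1-i) then (0:A) else 1) *
                (((w0List n).map D).prod * (fallD D 0 n * x (i+1)))
              + (if Even (n-i) then (0:A) else 1) *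
                (((w0List n).map D).prod * (fallD D 0 n * x (i+1))) := by
          intro i hi
          rw [Finset.mem_range] at hi
          have h := epair (n-1-i) (((w0List n).map D).prod * (fallD D 0 n * x (i+1)))
          rw [show n-1-i+1 = n-i by omega] at h
          exact h
        rw [Finset.sum_congr rfl hz, Finset.sum_add_distrib, hsgn, neg_smul, smul_add]
        abel
      rw [htail']
      rw [Finset.sum_range_succ]
      simp only [Nat.add_sub_cancel]
      rw [Finset.sum_range_succ' (fun i => (if Even (n - i) then (0:A) else 1) *
        (((w0List n).map D).prod * (fallD D 0 n * x i))) n]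
      have hs2 : ∑ i ∈ Finset.range n, (if Even (n-(i+1)) then (0:A) else 1) *
            (((w0List n).map D).prod * (fallD D 0 n * x (i+1)))
          = ∑ i ∈ Finset.range n, (if Even (n-1-i) then (0:A) else 1) *
            (((w0List n).map D).prod * (fallD D 0 n * x (i+1))) :=
        Finset.sum_congr rfl fun i _ => by rw [show n-(i+1) = n-1-i by omega]
      rw [hs2]
      simp only [Nat.sub_zero, smul_add]
      abel


/-- In the odd nilHecke algebra `ONH_n` (presented abstractly by
odd generators `x i`, `D i` and the odd nilHecke relations, with parity
involution `ι`) equipped with the local differential `d(x_i) = x_i²`,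
`d(∂_i) = 1`, the differential of the longest divided difference operator is
`d(∂_{w_0}) = Σ_{i=1}^n {i−1} x_i ∂_{w_0} − (−1)^{C(n,2)} Σ_{i=1}^n {n−i} ∂_{w_0} x_i`,
where `{m} = 0` if `m` is even and `1` if `m` is odd (here written 0-indexed). -/
theorem stmt8 {A : Type*} [Ring A] (n : ℕ) (x D : ℕ → A)
    (hxx : ∀ i j, i < n → j < n → i ≠ j → x i * x j = -(x j * x i))
    (hDDdist : ∀ i j, i + 1 < n → j + 1 < n → (i + 1 < j ∨ j + 1 < i) →
      D i * D j = -(D j * D i))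
    (hD2 : ∀ i, i + 1 < n → D i * D i = 0)
    (hbraid : ∀ i, i + 2 < n → D i * D (i + 1) * D i = D (i + 1) * D i * D (i + 1))
    (hDx : ∀ i j, i + 1 < n → j < n → j ≠ i → j ≠ i + 1 → D i * x j = -(x j * D i))
    (hmixa : ∀ i, i + 1 < n → x i * D i + D i * x (i + 1) = 1)
    (hmixb : ∀ i, i + 1 < n → D i * x i + x (i + 1) * D i = 1)
    (ι : A →+* A) (hιx : ∀ i, i < n → ι (x i) = -x i)
    (hιD : ∀ i, i + 1 < n → ι (D i) = -D i)
    (d : A → A)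
    (hd_add : ∀ a b, d (a + b) = d a + d b)
    (hd_leib : ∀ a b, d (a * b) = d a * b + ι a * d b)
    (hdx : ∀ i, i < n → d (x i) = x i ^ 2)
    (hdD : ∀ i, i + 1 < n → d (D i) = 1) :
    d (((w0List n).map D).prod) =
      (∑ i ∈ Finset.range n, (if Even i then (0 : A) else 1) *
          (x i * ((w0List n).map D).prod)) -
        (-1 : A) ^ (n.choose 2) *
          ∑ i ∈ Finset.range n, (if Even (n - 1 - i) then (0 : A) else 1) *
            (((w0List n).map D).prod * x i) := by
  have h := stmt8_aux n x D hDDdist hD2 hbraid hDx hmixa hmixb ι hιD d hd_leib hdD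
  rw [h, zsmul_eq_mul]
  simp only [Int.cast_pow, Int.cast_neg, Int.cast_one]
end

section
/- In OPol_n with the differential d(x_i) = x_i², one has d(x^δ) = Σ_{i=1}^n {n−i} x_i x^δ, where x^δ = x_1^{n−1} x_2^{n−2} ··· x_{n−1}. -/
section Aux

variable {A : Type*} [Ring A] {n : ℕ}

/-- key list lemma -/
lemma stmt10_key (x : Fin n → A)
    (hxx : ∀ i j, i ≠ j → x i * x j = -(x j * x i))
    (ι : A →+* A) (hιx : ∀ i, ι (x i) = -x i)
    (d : A → A)
    (hd_add : ∀ a b, d (a + b) = d a + d b)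
    (hd_leib : ∀ a b, d (a * b) = d a * b + ι a * d b)
    (hdx : ∀ i, d (x i) = x i ^ 2) (e : Fin n → ℕ) :
    ∀ l : List (Fin n), l.Nodup →
      d ((l.map fun i => x i ^ e i).prod) =
        (l.map fun i => (if Even (e i) then (0 : A) else 1) *
          (x i * (l.map fun j => x j ^ e j).prod)).sum := by
  have hd1 : d 1 = 0 := by
    have h := hd_leib 1 1
    simp only [one_mul, mul_one, map_one] at h
    exact (left_eq_add.mp h)
  -- anticommutation with powers
  have hcomm : ∀ i j, i ≠ j → ∀ k, x i * x j ^ k = (-1 : A) ^ k * (x j ^ k * x i) := by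
    intro i j hij k
    induction k with
    | zero => simp
    | succ k ih =>
      rw [pow_succ, pow_succ]
      calc x i * (x j ^ k * x j) = (x i * x j ^ k) * x j := by rw [mul_assoc]
        _ = ((-1 : A) ^ k * (x j ^ k * x i)) * x j := by rw [ih]
        _ = (-1 : A) ^ k * (x j ^ k * (x i * x j)) := by
            simp [mul_assoc]
        _ = (-1 : A) ^ k * (x j ^ k * (-(x j * x i))) := by rw [hxx i j hij]
        _ = (-1 : A) ^ k * (-1 : A) * (x j ^ k * x j * x i) := by
            simp [mul_assoc, mul_neg, neg_mul]
  -- derivative of a power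
  have hdpow : ∀ (i : Fin n) (k : ℕ),
      d (x i ^ k) = (if Even k then (0 : A) else 1) * (x i * x i ^ k) := by
    intro i k
    induction k with
    | zero => simpa using hd1
    | succ k ih =>
      have h : d (x i ^ (k + 1)) = d (x i * x i ^ k) := by rw [pow_succ']
      rw [h, hd_leib, hdx, hιx, ih]
      rcases Nat.even_or_odd k with hk | hk
      · rw [if_pos hk, if_neg (by simp [Nat.even_add_one, hk])]
        simp only [mul_zero, zero_mul, add_zero, one_mul, pow_succ', sq, mul_assoc, pow_zero]
      · rw [if_neg (by simp [Nat.not_even_iff_odd.mpr hk]),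
          if_pos (by simp [Nat.even_add_one, Nat.not_even_iff_odd.mpr hk])]
        simp only [one_mul, zero_mul, sq, mul_assoc, neg_mul]
        exact add_neg_cancel _
  -- ι of a power
  have hιpow : ∀ (i : Fin n) (k : ℕ), ι (x i ^ k) = (-1 : A) ^ k * x i ^ k := by
    intro i k
    rw [map_pow, hιx, neg_pow]
  -- pulling a factor into a list sum
  have hsum : ∀ (r : A) (L : List (Fin n)) (f : Fin n → A),
      r * (L.map f).sum = (L.map fun j => r * f j).sum := by
    intro r L f
    induction L with
    | nil => simp
    | cons b L ihL => simp [mul_add, ihL]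
  intro l
  induction l with
  | nil => simpa using hd1
  | cons a l ih =>
    intro hnd
    have hnd' : l.Nodup := hnd.of_cons
    have ha : a ∉ l := (List.nodup_cons.mp hnd).1
    simp only [List.map_cons, List.prod_cons, List.sum_cons]
    rw [hd_leib, hdpow, hιpow, ih hnd']
    congr 1
    · by_cases h : Even (e a)
      · simp [h]
      · simp [h, mul_assoc]
    · rw [mul_assoc, hsum, hsum]
      refine congrArg List.sum (List.map_congr_left ?_)
      intro j hj
      have hja : j ≠ a := by rintro rfl; exact ha hj
      by_cases h : Even (e j)
      · simp [h]
      · simp only [h, if_neg, if_false, one_mul]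
        rw [← mul_assoc (x j), hcomm j a hja (e a)]
        simp [mul_assoc]

end Aux

/-- In `OPol_n` (presented abstractly: `x i` odd anticommuting
generators, `ι` the parity involution, `d` the odd derivation with
`d(x_i) = x_i²`), one has `d(x^δ) = Σ_{i=1}^n {n−i} x_i x^δ` (written here
0-indexed, `{m}` being `0` for `m` even and `1` for `m` odd). -/
theorem stmt10 {A : Type*} [Ring A] {n : ℕ} (x : Fin n → A)
    (hxx : ∀ i j, i ≠ j → x i * x j = -(x j * x i))
    (ι : A →+* A) (hιx : ∀ i, ι (x i) = -x i)
    (d : A → A)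
    (hd_add : ∀ a b, d (a + b) = d a + d b)
    (hd_leib : ∀ a b, d (a * b) = d a * b + ι a * d b)
    (hdx : ∀ i, d (x i) = x i ^ 2) :
    d (xDelta x) =
      ∑ i : Fin n, (if Even (n - 1 - (i : ℕ)) then (0 : A) else 1) *
        (x i * xDelta x) := by
  have h := stmt10_key x hxx ι hιx d hd_add hd_leib hdx
    (fun i => n - 1 - (i : ℕ)) (List.finRange n) (List.nodup_finRange n)
  rw [xDelta, h, Fin.sum_univ_def]
end

section
/- A partition λ has neither addable nor removable boxes whose content is odd if and only if λ is a Lima partition, i.e., every part λ_i is even and each value among the parts occurs an even number of times (λ_{2j−1} = λ_{2j} for all j). -/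
/-- Identify a partition `λ` (an antitone, eventually-zero
function `ℕ → ℕ`, 0-indexed rows) with its Young diagram; the content of the
box in row `r`, column `c` (0-indexed) is `c − r`.  Row `r` is addable iff
`r = 0` or `λ_{r−1} > λ_r`, the added box having content `λ_r − r`; row `r` is
removable iff `λ_r > λ_{r+1}`, the removed box having content `λ_r − 1 − r`.
Then `λ` has neither addable nor removable boxes of odd content if and only if
`λ` is a Lima partition: every part is even and each value occurs an even
number of times (`λ_{2j} = λ_{2j+1}` for all `j`, 0-indexed). -/
theorem stmt18 (lam : ℕ → ℕ) (hanti : Antitone lam)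
    (hfin : ∃ m, ∀ j, m ≤ j → lam j = 0) :
    ((∀ r, (r = 0 ∨ lam r < lam (r - 1)) → ¬ Odd ((lam r : ℤ) - (r : ℤ))) ∧
        (∀ r, lam (r + 1) < lam r → ¬ Odd ((lam r : ℤ) - 1 - (r : ℤ))))
      ↔ ((∀ i, Even (lam i)) ∧ ∀ j, lam (2 * j) = lam (2 * j + 1)) := by
  constructor
  · rintro ⟨ha, hr⟩
    have key : ∀ j, Even (lam (2 * j)) ∧ lam (2 * j) = lam (2 * j + 1) := by
      intro j
      induction j with
      | zero =>
        have h0 : ¬ Odd ((lam 0 : ℤ) - (0 : ℤ)) := ha 0 (Or.inl rfl)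
        rw [Int.not_odd_iff_even, Int.even_iff] at h0
        have he : Even (lam 0) := by rw [Nat.even_iff]; omega
        refine ⟨by simpa using he, ?_⟩
        by_contra hne
        have hlt : lam (0 + 1) < lam 0 := by
          have := hanti (show (0:ℕ) ≤ 1 by omega)
          simp at hne ⊢
          omega
        have h1 := hr 0 hlt
        rw [Int.not_odd_iff_even, Int.even_iff] at h1
        rw [Nat.even_iff] at he
        simp at h1
        omega
      | succ j ih =>
        obtain ⟨ihe, iheq⟩ := ih
        rw [Nat.even_iff] at ihe
        have heven : Even (lam (2 * (j + 1))) := by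
          by_cases h : lam (2 * j + 2) < lam (2 * j + 1)
          · have hcond : lam (2 * j + 2) < lam (2 * j + 2 - 1) := by
              have : 2 * j + 2 - 1 = 2 * j + 1 := by omega
              rw [this]; exact h
            have h2 := ha (2 * j + 2) (Or.inr hcond)
            rw [Int.not_odd_iff_even, Int.even_iff] at h2
            have : 2 * (j + 1) = 2 * j + 2 := by omega
            rw [this, Nat.even_iff]
            omega
          · have hle := hanti (show 2 * j + 1 ≤ 2 * j + 2 by omega)
            have heq : lam (2 * j + 2) = lam (2 * j + 1) := by omega
            have : 2 * (j + 1) = 2 * j + 2 := by omega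
            rw [this, heq, ← iheq, Nat.even_iff]
            omega
        refine ⟨heven, ?_⟩
        by_contra hne
        have hlt : lam (2 * (j + 1) + 1) < lam (2 * (j + 1)) := by
          have := hanti (show 2 * (j + 1) ≤ 2 * (j + 1) + 1 by omega)
          omega
        have h3 := hr (2 * (j + 1)) hlt
        rw [Int.not_odd_iff_even, Int.even_iff] at h3
        rw [Nat.even_iff] at heven
        push_cast at h3
        omega
    constructor
    · intro i
      rcases Nat.even_or_odd i with ⟨j, hj⟩ | ⟨j, hj⟩
      · have := (key j).1
        rwa [show i = 2 * j by omega]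
      · have := (key j).1
        rw [show i = 2 * j + 1 by omega, ← (key j).2]
        exact this
    · intro j; exact (key j).2
  · rintro ⟨he, hq⟩
    constructor
    · intro r hcond
      rw [Int.not_odd_iff_even, Int.even_iff]
      have hle := (he r)
      rw [Nat.even_iff] at hle
      have hreven : r % 2 = 0 := by
        rcases Nat.even_or_odd r with ⟨j, hj⟩ | ⟨j, hj⟩
        · omega
        · exfalso
          rcases hcond with h0 | hlt
          · omega
          · have := hq j
            rw [show r - 1 = 2 * j by omega] at hlt
            rw [show r = 2 * j + 1 by omega] at hlt
            omega
      push_cast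
      omega
    · intro r hlt
      rw [Int.not_odd_iff_even, Int.even_iff]
      have hle := he r
      rw [Nat.even_iff] at hle
      have hrodd : r % 2 = 1 := by
        rcases Nat.even_or_odd r with ⟨j, hj⟩ | ⟨j, hj⟩
        · exfalso
          have := hq j
          rw [show r = 2 * j by omega] at hlt
          omega
        · omega
      push_cast
      omega
end
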